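/- arXiv:2006.09697 — 3 statements merged into one kernel-verified Lean document; each statement's English description precedes it below -/
import Mathlib

section
/- Let α > 2 and c, γ > 0 be real constants, and let f : ℕ → ℝ satisfy f(n) → ∞ and f(n)/n → 0 as n → ∞. Let (m_i)_{i ≥ 1} be a sequence of positive reals with m_i = (1+o(1))·c·i^{−α}·γ^{i}·(2i)! as i → ∞. For n ∈ ℕ set I(n) := {(j,k) ∈ ℤ_{≥1}² : j + k = n − 1, j ≥ f(n), k ≥ f(n)}. Then, as n → ∞, (1/m_n)·Σ_{(j,k) ∈ I(n)} C(2n−2, 2j)·m_j·m_k·j·k = (1+o(1))·(c/(2γ(α−2)))·(1/(f(n)^{α−2}·n)). -/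
open Filter Finset

lemma antitoneOn_rpow_neg (β : ℝ) (hβ : 0 < β) {s t : ℝ} (hs : 0 < s) :
    AntitoneOn (fun x : ℝ => x ^ (-β)) (Set.Icc s t) := fun _x hx _y _hy hxy =>
  Real.rpow_le_rpow_of_nonpos (lt_of_lt_of_le hs hx.1) hxy (neg_nonpos.2 hβ.le)

lemma sum_rpow_le (β : ℝ) (hβ : 1 < β) (N M : ℕ) (hN : 2 ≤ N) :
    ∑ j ∈ Finset.Icc N M, (j : ℝ) ^ (-β) ≤ ((N : ℝ) - 1) ^ (1 - β) / (β - 1) := by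
  have hβ1 : (0:ℝ) < β - 1 := by linarith
  have hN1 : (1:ℝ) ≤ (N:ℝ) - 1 := by
    have : (2:ℝ) ≤ (N:ℝ) := by exact_mod_cast hN
    linarith
  rcases le_or_gt N M with h | h
  · set a : ℕ := M + 1 - N with ha
    have haM : (N:ℝ) - 1 + a = (M:ℝ) := by
      have : (a:ℝ) = (M:ℝ) + 1 - N := by
        rw [ha]; push_cast [Nat.cast_sub (by omega : N ≤ M + 1)]; ring
      rw [this]; ring
    have hanti : AntitoneOn (fun x : ℝ => x ^ (-β)) (Set.Icc ((N:ℝ)-1) ((N:ℝ)-1+a)) :=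
      antitoneOn_rpow_neg β (by linarith) (by linarith)
    have key := hanti.sum_le_integral
    have hsum : ∑ j ∈ Finset.Icc N M, (j : ℝ) ^ (-β)
        = ∑ i ∈ Finset.range a, ((N:ℝ) - 1 + ((i + 1 : ℕ):ℝ)) ^ (-β) := by
      rw [← Finset.Ico_add_one_right_eq_Icc, Finset.sum_Ico_eq_sum_range]
      apply Finset.sum_congr (by rw [ha])
      intro i _
      congr 1
      push_cast
      ring
    rw [hsum]
    refine le_trans key ?_
    rw [integral_rpow (Or.inr ⟨by intro hc; exact hβ.ne' (by linarith),
        by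
          intro hc
          rw [Set.uIcc_of_le (by linarith [Nat.cast_nonneg (α := ℝ) a] : (N:ℝ)-1 ≤ (N:ℝ)-1+a)] at hc
          exact absurd hc.1 (by linarith)⟩)]
    rw [haM]
    have h1 : -β + 1 = 1 - β := by ring
    rw [h1]
    have hMpow : (0:ℝ) ≤ (M:ℝ) ^ (1-β) := Real.rpow_nonneg (by positivity) _
    have heq : ((M:ℝ) ^ (1-β) - ((N:ℝ)-1) ^ (1-β)) / (1 - β)
        = (((N:ℝ)-1) ^ (1-β) - (M:ℝ) ^ (1-β)) / (β - 1) := by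
      rw [div_eq_div_iff (by linarith) (by linarith)]; ring
    rw [heq]
    gcongr <;> linarith
  · rw [Finset.Icc_eq_empty (by omega), Finset.sum_empty]
    positivity

lemma sum_rpow_ge (β : ℝ) (hβ : 1 < β) (N M : ℕ) (hN : 1 ≤ N) :
    ((N : ℝ) ^ (1 - β) - ((M : ℝ) + 1) ^ (1 - β)) / (β - 1) ≤
      ∑ j ∈ Finset.Icc N M, (j : ℝ) ^ (-β) := by
  have hβ1 : (0:ℝ) < β - 1 := by linarith
  have hN0 : (0:ℝ) < (N:ℝ) := by exact_mod_cast hN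
  rcases le_or_gt N M with h | h
  · have key := (antitoneOn_rpow_neg β (by linarith) hN0).integral_le_sum_Ico
      (by omega : N ≤ M + 1)
    rw [integral_rpow (Or.inr ⟨by intro hc; exact hβ.ne' (by linarith),
        by
          intro hc
          rw [Set.uIcc_of_le (Nat.cast_le.mpr (by omega : N ≤ M + 1))] at hc
          exact absurd hc.1 (by linarith)⟩)] at key
    have hc : ((M + 1:ℕ):ℝ) = (M:ℝ) + 1 := by push_cast; ring
    have h1 : -β + 1 = 1 - β := by ring
    rw [hc, h1] at key
    rw [← Finset.Ico_add_one_right_eq_Icc]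
    refine le_trans (le_of_eq ?_) key
    rw [div_eq_div_iff (by linarith) (by linarith)]; ring
  · rw [Finset.Icc_eq_empty (by omega), Finset.sum_empty]
    have hle : (M:ℝ) + 1 ≤ (N:ℝ) := by
      have : ((M+1:ℕ):ℝ) ≤ (N:ℝ) := Nat.cast_le.mpr (by omega)
      push_cast at this; linarith
    have h2 := Real.rpow_le_rpow_of_nonpos (by positivity : (0:ℝ) < (M:ℝ)+1) hle
      (by linarith : 1 - β ≤ 0)
    exact div_nonpos_of_nonpos_of_nonneg (by linarith) hβ1.le

lemma sum_reflect_aux (g : ℕ → ℝ) (a b m : ℕ) (hab : a ≤ b) (hb : b ≤ m) :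
    ∑ j ∈ Finset.Icc (m - b) (m - a), g (m - j) = ∑ k ∈ Finset.Icc a b, g k := by
  refine Finset.sum_nbij' (fun j => m - j) (fun k => m - k) ?_ ?_ ?_ ?_ ?_ <;>
    intro x hx <;> simp only [Finset.mem_Icc] at * <;> omega

lemma pair_sum_eq (fn : ℝ) (n : ℕ) (hf1 : 1 ≤ fn) (g : ℕ → ℕ → ℝ) :
    ∑ p ∈ (Finset.range n ×ˢ Finset.range n).filter
        (fun p => p.1 + p.2 = n - 1 ∧ 1 ≤ p.1 ∧ 1 ≤ p.2 ∧
          fn ≤ (p.1 : ℝ) ∧ fn ≤ (p.2 : ℝ)),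
      g p.1 p.2
    = ∑ j ∈ Finset.Icc ⌈fn⌉₊ (n - 1 - ⌈fn⌉₊), g j (n - 1 - j) := by
  have hF1 : 1 ≤ ⌈fn⌉₊ := Nat.one_le_ceil_iff.2 (by linarith)
  refine Finset.sum_nbij' (fun p => p.1) (fun j => (j, n - 1 - j)) ?_ ?_ ?_ ?_ ?_
  · intro p hp
    simp only [Finset.mem_filter, Finset.mem_product, Finset.mem_range, Finset.mem_Icc] at *
    obtain ⟨⟨h1, h2⟩, h3, h4, h5, h6, h7⟩ := hp
    have hc1 : ⌈fn⌉₊ ≤ p.1 := Nat.ceil_le.2 h6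
    have hc2 : ⌈fn⌉₊ ≤ p.2 := Nat.ceil_le.2 h7
    omega
  · intro j hj
    simp only [Finset.mem_filter, Finset.mem_product, Finset.mem_range, Finset.mem_Icc] at *
    obtain ⟨h1, h2⟩ := hj
    have hle : fn ≤ (⌈fn⌉₊ : ℝ) := Nat.le_ceil fn
    refine ⟨⟨by omega, by omega⟩, by omega, by omega, by omega,
      hle.trans (by exact_mod_cast h1), hle.trans (by exact_mod_cast (by omega : ⌈fn⌉₊ ≤ n - 1 - j))⟩
  · intro p hp
    simp only [Finset.mem_filter, Finset.mem_product, Finset.mem_range] at hp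
    obtain ⟨⟨h1, h2⟩, h3, h4, h5, h6, h7⟩ := hp
    ext <;> simp <;> omega
  · intro j hj
    simp
  · intro p hp
    simp only [Finset.mem_filter, Finset.mem_product, Finset.mem_range] at hp
    obtain ⟨⟨h1, h2⟩, h3, h4, h5, h6, h7⟩ := hp
    show g p.1 p.2 = g p.1 (n - 1 - p.1)
    have : n - 1 - p.1 = p.2 := by omega
    rw [this]

set_option maxHeartbeats 2000000 in
lemma SM (α : ℝ) (hα : 2 < α) (f : ℕ → ℝ) (hf : Tendsto f atTop atTop)
    (hfo : Tendsto (fun n => f n / (n : ℝ)) atTop (nhds 0))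
    (w : ℕ → ℝ) (hw : Tendsto w atTop (nhds 1)) :
    Tendsto (fun n => (∑ j ∈ Finset.Icc ⌈f n⌉₊ (n - 1 - ⌈f n⌉₊),
        w j * w (n - 1 - j) * (j : ℝ) ^ (1 - α) * ((n - 1 - j : ℕ) : ℝ) ^ (1 - α)) /
      (2 * f n ^ (2 - α) * (n : ℝ) ^ (1 - α) / (α - 2))) atTop (nhds 1) := by
  set β := α - 1 with hβdef
  have hβ : 1 < β := by rw [hβdef]; linarith
  have hβ0 : (0:ℝ) < β := by linarith
  have hβ1 : (0:ℝ) < β - 1 := by linarith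
  have hexp1 : (1:ℝ) - α = -β := by rw [hβdef]; ring
  have hexp2 : (2:ℝ) - α = 1 - β := by rw [hβdef]; ring
  have hexp3 : α - 2 = β - 1 := by rw [hβdef]; ring
  simp only [hexp1, hexp2, hexp3]
  rw [Metric.tendsto_nhds]
  intro ε hε
  set ε' := min (ε / 10) (1 / 40) with hε'def
  have hε'pos : 0 < ε' := lt_min (by linarith) (by norm_num)
  have hε'le : ε' ≤ ε / 10 := min_le_left _ _
  have hε'small : ε' ≤ 1 / 40 := min_le_right _ _
  -- choice of δ
  set q : ℝ := (1 + ε') ^ (-β⁻¹) with hqdef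
  have hq0 : 0 < q := Real.rpow_pos_of_pos (by linarith) _
  have hq1 : q < 1 := Real.rpow_lt_one_of_one_lt_of_neg (by linarith)
    (neg_lt_zero.mpr (by positivity))
  set δ : ℝ := (1 - q) / 2 with hδdef
  have hδ0 : 0 < δ := by rw [hδdef]; linarith
  have hδh : δ < 1 / 2 := by rw [hδdef]; linarith
  have h2δ : 1 - 2 * δ = q := by rw [hδdef]; ring
  have h2δ0 : 0 < 1 - 2 * δ := by rw [h2δ]; exact hq0
  have hpow : (1 - 2 * δ) ^ (-β) = 1 + ε' := by
    rw [h2δ, hqdef, ← Real.rpow_mul (by linarith : (0:ℝ) ≤ 1 + ε')]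
    rw [show -β⁻¹ * -β = 1 by field_simp, Real.rpow_one]
  -- w bounds
  obtain ⟨Nw, hNw⟩ := eventually_atTop.1 ((Metric.tendsto_nhds.1 hw) ε' hε'pos)
  have hwlb : ∀ i, Nw ≤ i → 1 - ε' ≤ w i := by
    intro i hi
    have := hNw i hi
    rw [Real.dist_eq, abs_lt] at this
    linarith [this.1]
  have hwub : ∀ i, Nw ≤ i → w i ≤ 1 + ε' := by
    intro i hi
    have := hNw i hi
    rw [Real.dist_eq, abs_lt] at this
    linarith [this.2]
  -- eventual facts
  have hE1 : ∀ᶠ n in atTop, 2 ≤ f n := hf.eventually_ge_atTop 2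
  have hE2 : ∀ᶠ n in atTop, (Nw : ℝ) ≤ f n := hf.eventually_ge_atTop _
  have hinv : Tendsto (fun n => (f n)⁻¹) atTop (nhds 0) := tendsto_inv_atTop_zero.comp hf
  have hE3 : ∀ᶠ n in atTop, (1 - (f n)⁻¹) ^ (1 - β) ≤ 1 + ε' := by
    have h1 : Tendsto (fun n => ((1:ℝ) - (f n)⁻¹)) atTop (nhds 1) := by
      have := tendsto_const_nhds (α := ℕ) (x := (1:ℝ)) |>.sub hinv
      simpa using this
    have h2 := h1.rpow_const (p := 1 - β) (Or.inl one_ne_zero)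
    rw [Real.one_rpow] at h2
    exact h2.eventually (eventually_le_nhds (by linarith))
  have hE4 : ∀ᶠ n in atTop, 1 - ε' ≤ (1 + (f n)⁻¹) ^ (1 - β) := by
    have h1 : Tendsto (fun n => ((1:ℝ) + (f n)⁻¹)) atTop (nhds 1) := by
      have := tendsto_const_nhds (α := ℕ) (x := (1:ℝ)) |>.add hinv
      simpa using this
    have h2 := h1.rpow_const (p := 1 - β) (Or.inl one_ne_zero)
    rw [Real.one_rpow] at h2
    exact h2.eventually (eventually_ge_nhds (by linarith))
  have hE5 : ∀ᶠ n in atTop, (f n / (δ * n)) ^ (β - 1) < ε' := by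
    have hr0 : Tendsto (fun n => f n / (δ * n)) atTop (nhds 0) := by
      have heq : (fun n : ℕ => f n / (δ * n)) = fun n => f n / n / δ := by
        funext k; rw [div_div, mul_comm]
      rw [heq]
      simpa using hfo.div_const δ
    have := hr0.rpow_const (p := β - 1) (Or.inr (by linarith))
    rw [Real.zero_rpow (by linarith : β - 1 ≠ 0)] at this
    exact this.eventually (eventually_lt_nhds hε'pos)
  have hE6 : ∀ᶠ n in atTop, (β - 1) * δ ^ (-(2*β)) * (f n / n) ^ (β - 1) < ε' := by
    have h0 : Tendsto (fun n => (f n / n) ^ (β - 1)) atTop (nhds 0) := by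
      have := hfo.rpow_const (p := β - 1) (Or.inr (by linarith))
      rwa [Real.zero_rpow (by linarith : β - 1 ≠ 0)] at this
    have h1 := h0.const_mul ((β - 1) * δ ^ (-(2*β)))
    rw [mul_zero] at h1
    exact h1.eventually (eventually_lt_nhds hε'pos)
  have hE7 : ∀ᶠ n in atTop, f n / (n:ℝ) < δ / 2 := hfo.eventually (eventually_lt_nhds (by positivity))
  have hE8 : ∀ᶠ (n:ℕ) in atTop, (4 / δ : ℝ) ≤ (n:ℝ) := tendsto_natCast_atTop_atTop.eventually_ge_atTop _
  have hE9 : ∀ᶠ (n:ℕ) in atTop, (2 / (1 - 2*δ) : ℝ) ≤ (n:ℝ) := tendsto_natCast_atTop_atTop.eventually_ge_atTop _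
  filter_upwards [hE1, hE2, hE3, hE4, hE5, hE6, hE7, hE8, hE9,
    eventually_ge_atTop 1] with n h1 h2 h3 h4 h5 h6 h7 h8 h9 hn1
  -- basic positivity and index facts
  have hf0 : (0:ℝ) < f n := by linarith
  have hn0 : (0:ℝ) < (n:ℝ) := by exact_mod_cast hn1
  have hδn4 : (4:ℝ) ≤ δ * n := by
    have := (div_le_iff₀ hδ0).1 h8
    linarith [this]
  have hδn0 : (0:ℝ) < δ * n := by linarith
  have hfδ : f n + 2 ≤ δ * n := by
    have h7' : f n < δ / 2 * n := (div_lt_iff₀ hn0).1 h7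
    linarith
  have h9' : (2:ℝ) ≤ (1 - 2*δ) * n := by
    have := (div_le_iff₀ h2δ0).1 h9
    linarith [this]
  set F := ⌈f n⌉₊ with hFdef
  set J := ⌊δ * (n:ℝ)⌋₊ with hJdef
  have hfF : f n ≤ (F:ℝ) := Nat.le_ceil _
  have hFf : (F:ℝ) < f n + 1 := Nat.ceil_lt_add_one (by linarith)
  have hF2 : 2 ≤ F := by exact_mod_cast le_trans h1 hfF
  have hNwF : Nw ≤ F := by exact_mod_cast le_trans h2 hfF
  have hJle : (J:ℝ) ≤ δ * n := Nat.floor_le (by positivity)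
  have hJgt : δ * n < (J:ℝ) + 1 := Nat.lt_floor_add_one _
  have hFJ : F < J := by
    have : (F:ℝ) < (J:ℝ) := by linarith
    exact_mod_cast this
  have h2J : 2 * J + 2 ≤ n := by
    have : ((2 * J + 2 : ℕ):ℝ) ≤ (n:ℝ) := by push_cast; linarith [hJle, h9']
    exact_mod_cast this
  set R := n - 1 - F with hRdef
  -- split of the sum
  have e1 : Finset.Ico F (J+1) = Finset.Icc F J := Finset.Ico_add_one_right_eq_Icc F J
  have e2 : Finset.Ico (J+1) (n-1-J) = Finset.Icc (J+1) (n-2-J) := by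
    rw [show n-1-J = (n-2-J)+1 from by omega, Finset.Ico_add_one_right_eq_Icc]
  have e3 : Finset.Ico (n-1-J) (R+1) = Finset.Icc (n-1-J) R := Finset.Ico_add_one_right_eq_Icc _ _
  have hsplit : ∀ t : ℕ → ℝ,
      ∑ j ∈ Finset.Icc F R, t j =
        ∑ j ∈ Finset.Icc F J, t j + ∑ j ∈ Finset.Icc (J+1) (n-2-J), t j
          + ∑ j ∈ Finset.Icc (n-1-J) R, t j := by
    intro t
    rw [← Finset.Ico_add_one_right_eq_Icc F R,
      ← Finset.Ico_union_Ico_eq_Ico (by omega : F ≤ n-1-J) (by omega : n-1-J ≤ R+1),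
      Finset.sum_union (Finset.Ico_disjoint_Ico_consecutive _ _ _),
      ← Finset.Ico_union_Ico_eq_Ico (by omega : F ≤ J+1) (by omega : J+1 ≤ n-1-J),
      Finset.sum_union (Finset.Ico_disjoint_Ico_consecutive _ _ _), e1, e2, e3]
  set Q : ℝ := (n:ℝ)^(-β) * (f n ^ (1-β) / (β - 1)) with hQdef
  have hQpos : (0:ℝ) < Q := by
    rw [hQdef]; positivity
  -- tail sum bounds
  have hfpow0 : (0:ℝ) ≤ f n ^ (1-β) := Real.rpow_nonneg hf0.le _
  have htail_ub : ∑ j ∈ Finset.Icc F J, (j:ℝ)^(-β) ≤ (1 + ε') * (f n ^ (1-β) / (β-1)) := by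
    have hb := sum_rpow_le β hβ F J hF2
    have hstep1 : ((F:ℝ)-1) ^ (1-β) ≤ (f n - 1) ^ (1-β) :=
      Real.rpow_le_rpow_of_nonpos (by linarith) (by linarith) (by linarith)
    have hstep2 : (f n - 1) ^ (1-β) ≤ (1+ε') * f n ^ (1-β) := by
      have hinvle : (f n)⁻¹ ≤ 2⁻¹ := by
        apply inv_anti₀ (by norm_num) h1
      have hfe : f n - 1 = f n * (1 - (f n)⁻¹) := by rw [mul_sub, mul_one, mul_inv_cancel₀ hf0.ne']
      rw [hfe, Real.mul_rpow hf0.le (by linarith : (0:ℝ) ≤ 1 - (f n)⁻¹)]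
      have := mul_le_mul_of_nonneg_left h3 hfpow0
      linarith
    calc ∑ j ∈ Finset.Icc F J, (j:ℝ)^(-β) ≤ ((F:ℝ)-1)^(1-β)/(β-1) := hb
      _ ≤ ((1+ε') * f n ^ (1-β))/(β-1) :=
          (div_le_div_iff_of_pos_right hβ1).mpr (hstep1.trans hstep2)
      _ = (1+ε') * (f n ^ (1-β)/(β-1)) := by ring
  have htail_lb : (1 - 2*ε') * (f n ^ (1-β) / (β-1)) ≤ ∑ j ∈ Finset.Icc F J, (j:ℝ)^(-β) := by
    have hb := sum_rpow_ge β hβ F J (by omega)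
    have hF0 : (0:ℝ) < (F:ℝ) := by
      have : (0:ℕ) < F := by omega
      exact_mod_cast this
    have hstep1 : (1-ε') * f n ^ (1-β) ≤ (F:ℝ) ^ (1-β) := by
      have ha : ((f n + 1)) ^ (1-β) ≤ (F:ℝ)^(1-β) :=
        Real.rpow_le_rpow_of_nonpos hF0 hFf.le (by linarith)
      have hfe : f n + 1 = f n * (1 + (f n)⁻¹) := by rw [mul_add, mul_one, mul_inv_cancel₀ hf0.ne']
      rw [hfe, Real.mul_rpow hf0.le (by positivity : (0:ℝ) ≤ 1 + (f n)⁻¹)] at ha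
      have := mul_le_mul_of_nonneg_left h4 hfpow0
      linarith
    have hstep2 : ((J:ℝ)+1) ^ (1-β) ≤ ε' * f n ^ (1-β) := by
      have ha : ((J:ℝ)+1)^(1-β) ≤ (δ*n)^(1-β) :=
        Real.rpow_le_rpow_of_nonpos hδn0 hJgt.le (by linarith)
      have hkey : (δ*(n:ℝ))^(1-β) = (f n/(δ*(n:ℝ)))^(β-1) * f n ^(1-β) := by
        rw [Real.div_rpow hf0.le hδn0.le]
        have huv : f n ^ (β-1) * f n ^ (1-β) = 1 := by
          rw [← Real.rpow_add hf0]; norm_num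
        have hdninv : ((δ*(n:ℝ))^(β-1))⁻¹ = (δ*(n:ℝ))^(1-β) := by
          rw [← Real.rpow_neg hδn0.le, show -(β-1) = 1-β from by ring]
        calc (δ*(n:ℝ))^(1-β) = (f n ^ (β-1) * f n ^ (1-β)) * (δ*(n:ℝ))^(1-β) := by
              rw [huv, one_mul]
          _ = f n ^ (β-1) / (δ*(n:ℝ))^(β-1) * f n ^ (1-β) := by
              rw [div_eq_mul_inv, hdninv]; ring
      have : (f n/(δ*(n:ℝ)))^(β-1) * f n ^(1-β) ≤ ε' * f n ^ (1-β) :=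
        mul_le_mul_of_nonneg_right (le_of_lt h5) hfpow0
      calc ((J:ℝ)+1)^(1-β) ≤ (δ*(n:ℝ))^(1-β) := ha
        _ = (f n/(δ*(n:ℝ)))^(β-1) * f n ^(1-β) := hkey
        _ ≤ ε' * f n ^ (1-β) := this
    calc (1 - 2*ε') * (f n ^ (1-β) / (β-1))
        = ((1-ε') * f n ^ (1-β) - ε' * f n ^ (1-β)) / (β-1) := by ring
      _ ≤ ((F:ℝ) ^ (1-β) - ((J:ℝ)+1)^(1-β)) / (β-1) :=
          (div_le_div_iff_of_pos_right hβ1).mpr (by linarith)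
      _ ≤ ∑ j ∈ Finset.Icc F J, (j:ℝ)^(-β) := hb
  -- reflection
  have hrefl : ∑ j ∈ Finset.Icc (n-1-J) R, ((n-1-j:ℕ):ℝ)^(-β)
      = ∑ k ∈ Finset.Icc F J, (k:ℝ)^(-β) := by
    have := sum_reflect_aux (fun k => (k:ℝ)^(-β)) F J (n-1) hFJ.le (by omega)
    rw [hRdef]
    exact this
  -- per-block bounds
  have hwnn : ∀ i, Nw ≤ i → (0:ℝ) ≤ w i := fun i hi => le_trans (by linarith) (hwlb i hi)
  have hcastk : ∀ j, j ≤ n - 1 → ((n-1-j:ℕ):ℝ) = (n:ℝ) - 1 - (j:ℝ) := by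
    intro j hj
    rw [Nat.cast_sub hj, Nat.cast_sub (by omega : 1 ≤ n), Nat.cast_one]
  have hB1u : ∑ j ∈ Finset.Icc F J, (w j * w (n-1-j) * (j:ℝ)^(-β) * ((n-1-j:ℕ):ℝ)^(-β))
      ≤ (1+ε')^3 * (n:ℝ)^(-β) * ∑ j ∈ Finset.Icc F J, (j:ℝ)^(-β) := by
    rw [Finset.mul_sum]
    apply Finset.sum_le_sum
    intro j hj
    rw [Finset.mem_Icc] at hj
    have hwj := hwub j (by omega)
    have hwk := hwub (n-1-j) (by omega)
    have hwj0 : (0:ℝ) ≤ w j := hwnn j (by omega)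
    have hwk0 : (0:ℝ) ≤ w (n-1-j) := hwnn (n-1-j) (by omega)
    have hkge : (1-2*δ)*(n:ℝ) ≤ ((n-1-j:ℕ):ℝ) := by
      rw [hcastk j (by omega)]
      have hjle : (j:ℝ) ≤ δ*n := le_trans (Nat.cast_le.2 hj.2) hJle
      linarith
    have hkpow : ((n-1-j:ℕ):ℝ)^(-β) ≤ (1+ε') * (n:ℝ)^(-β) := by
      have h' : ((n-1-j:ℕ):ℝ)^(-β) ≤ ((1-2*δ)*(n:ℝ))^(-β) :=
        Real.rpow_le_rpow_of_nonpos (by positivity) hkge (by linarith)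
      rwa [Real.mul_rpow h2δ0.le hn0.le, hpow] at h'
    have hjpow0 : (0:ℝ) ≤ (j:ℝ)^(-β) := Real.rpow_nonneg (Nat.cast_nonneg j) _
    have m1 : w j * w (n-1-j) ≤ (1+ε')*(1+ε') := mul_le_mul hwj hwk hwk0 (by linarith)
    have m2 : w j * w (n-1-j) * (j:ℝ)^(-β) ≤ (1+ε')*(1+ε')*(j:ℝ)^(-β) :=
      mul_le_mul_of_nonneg_right m1 hjpow0
    calc w j * w (n-1-j) * (j:ℝ)^(-β) * ((n-1-j:ℕ):ℝ)^(-β)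
        ≤ (1+ε')*(1+ε')*(j:ℝ)^(-β) * ((1+ε') * (n:ℝ)^(-β)) :=
          mul_le_mul m2 hkpow (Real.rpow_nonneg (Nat.cast_nonneg _) _)
            (mul_nonneg (mul_nonneg (by linarith) (by linarith)) hjpow0)
      _ = (1+ε')^3 * (n:ℝ)^(-β) * (j:ℝ)^(-β) := by ring
  have hB1l : (1-ε')^2 * (n:ℝ)^(-β) * ∑ j ∈ Finset.Icc F J, (j:ℝ)^(-β)
      ≤ ∑ j ∈ Finset.Icc F J, (w j * w (n-1-j) * (j:ℝ)^(-β) * ((n-1-j:ℕ):ℝ)^(-β)) := by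
    rw [Finset.mul_sum]
    apply Finset.sum_le_sum
    intro j hj
    rw [Finset.mem_Icc] at hj
    have hwj := hwlb j (by omega)
    have hwk := hwlb (n-1-j) (by omega)
    have hwj0 : (0:ℝ) ≤ w j := hwnn j (by omega)
    have hwk0 : (0:ℝ) ≤ w (n-1-j) := hwnn (n-1-j) (by omega)
    have hk0 : (0:ℝ) < ((n-1-j:ℕ):ℝ) := by
      have : (0:ℕ) < n-1-j := by omega
      exact_mod_cast this
    have hkle : ((n-1-j:ℕ):ℝ) ≤ (n:ℝ) := Nat.cast_le.2 (by omega)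
    have hkpow : (n:ℝ)^(-β) ≤ ((n-1-j:ℕ):ℝ)^(-β) :=
      Real.rpow_le_rpow_of_nonpos hk0 hkle (by linarith)
    have hjpow0 : (0:ℝ) ≤ (j:ℝ)^(-β) := Real.rpow_nonneg (Nat.cast_nonneg j) _
    have hnpow0 : (0:ℝ) ≤ (n:ℝ)^(-β) := Real.rpow_nonneg hn0.le _
    have m1 : (1-ε')*(1-ε') ≤ w j * w (n-1-j) :=
      mul_le_mul hwj hwk (by linarith) hwj0
    have m2 : (1-ε')*(1-ε')*(j:ℝ)^(-β) ≤ w j * w (n-1-j) * (j:ℝ)^(-β) :=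
      mul_le_mul_of_nonneg_right m1 hjpow0
    calc (1-ε')^2 * (n:ℝ)^(-β) * (j:ℝ)^(-β)
        = (1-ε')*(1-ε')*(j:ℝ)^(-β) * (n:ℝ)^(-β) := by ring
      _ ≤ w j * w (n-1-j) * (j:ℝ)^(-β) * ((n-1-j:ℕ):ℝ)^(-β) :=
          mul_le_mul m2 hkpow hnpow0
            (mul_nonneg (mul_nonneg hwj0 hwk0) hjpow0)
  have hB3u : ∑ j ∈ Finset.Icc (n-1-J) R, (w j * w (n-1-j) * (j:ℝ)^(-β) * ((n-1-j:ℕ):ℝ)^(-β))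
      ≤ (1+ε')^3 * (n:ℝ)^(-β) * ∑ j ∈ Finset.Icc (n-1-J) R, ((n-1-j:ℕ):ℝ)^(-β) := by
    rw [Finset.mul_sum]
    apply Finset.sum_le_sum
    intro j hj
    rw [Finset.mem_Icc] at hj
    rw [hRdef] at hj
    have hwj := hwub j (by omega)
    have hwk := hwub (n-1-j) (by omega)
    have hwj0 : (0:ℝ) ≤ w j := hwnn j (by omega)
    have hwk0 : (0:ℝ) ≤ w (n-1-j) := hwnn (n-1-j) (by omega)
    have hjge : (1-2*δ)*(n:ℝ) ≤ (j:ℝ) := by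
      have h' : ((n-1-J:ℕ):ℝ) ≤ (j:ℝ) := Nat.cast_le.2 hj.1
      rw [hcastk J (by omega)] at h'
      linarith [hJle]
    have hjpow : (j:ℝ)^(-β) ≤ (1+ε') * (n:ℝ)^(-β) := by
      have h' : (j:ℝ)^(-β) ≤ ((1-2*δ)*(n:ℝ))^(-β) :=
        Real.rpow_le_rpow_of_nonpos (by positivity) hjge (by linarith)
      rwa [Real.mul_rpow h2δ0.le hn0.le, hpow] at h'
    have hkpow0 : (0:ℝ) ≤ ((n-1-j:ℕ):ℝ)^(-β) := Real.rpow_nonneg (Nat.cast_nonneg _) _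
    have m1 : w j * w (n-1-j) ≤ (1+ε')*(1+ε') := mul_le_mul hwj hwk hwk0 (by linarith)
    have m2 : w j * w (n-1-j) * (j:ℝ)^(-β) ≤ (1+ε')*(1+ε')*((1+ε') * (n:ℝ)^(-β)) := by
      have hjpow0 : (0:ℝ) ≤ (j:ℝ)^(-β) := Real.rpow_nonneg (Nat.cast_nonneg j) _
      calc w j * w (n-1-j) * (j:ℝ)^(-β) ≤ (1+ε')*(1+ε')*(j:ℝ)^(-β) :=
            mul_le_mul_of_nonneg_right m1 hjpow0
        _ ≤ (1+ε')*(1+ε')*((1+ε') * (n:ℝ)^(-β)) :=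
            mul_le_mul_of_nonneg_left hjpow (mul_nonneg (by linarith) (by linarith))
    calc w j * w (n-1-j) * (j:ℝ)^(-β) * ((n-1-j:ℕ):ℝ)^(-β)
        ≤ ((1+ε')*(1+ε')*((1+ε') * (n:ℝ)^(-β))) * ((n-1-j:ℕ):ℝ)^(-β) :=
          mul_le_mul_of_nonneg_right m2 hkpow0
      _ = (1+ε')^3 * (n:ℝ)^(-β) * ((n-1-j:ℕ):ℝ)^(-β) := by ring
  have hB3l : (1-ε')^2 * (n:ℝ)^(-β) * ∑ j ∈ Finset.Icc (n-1-J) R, ((n-1-j:ℕ):ℝ)^(-β)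
      ≤ ∑ j ∈ Finset.Icc (n-1-J) R, (w j * w (n-1-j) * (j:ℝ)^(-β) * ((n-1-j:ℕ):ℝ)^(-β)) := by
    rw [Finset.mul_sum]
    apply Finset.sum_le_sum
    intro j hj
    rw [Finset.mem_Icc] at hj
    rw [hRdef] at hj
    have hwj := hwlb j (by omega)
    have hwk := hwlb (n-1-j) (by omega)
    have hwj0 : (0:ℝ) ≤ w j := hwnn j (by omega)
    have hwk0 : (0:ℝ) ≤ w (n-1-j) := hwnn (n-1-j) (by omega)
    have hj0 : (0:ℝ) < (j:ℝ) := by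
      have : (0:ℕ) < j := by omega
      exact_mod_cast this
    have hjle : (j:ℝ) ≤ (n:ℝ) := Nat.cast_le.2 (by omega)
    have hjpow : (n:ℝ)^(-β) ≤ (j:ℝ)^(-β) :=
      Real.rpow_le_rpow_of_nonpos hj0 hjle (by linarith)
    have hkpow0 : (0:ℝ) ≤ ((n-1-j:ℕ):ℝ)^(-β) := Real.rpow_nonneg (Nat.cast_nonneg _) _
    have hjpow0 : (0:ℝ) ≤ (j:ℝ)^(-β) := Real.rpow_nonneg (Nat.cast_nonneg j) _
    have hnpow0 : (0:ℝ) ≤ (n:ℝ)^(-β) := Real.rpow_nonneg hn0.le _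
    have m1 : (1-ε')*(1-ε') ≤ w j * w (n-1-j) :=
      mul_le_mul hwj hwk (by linarith) hwj0
    have m2 : (1-ε')*(1-ε')*(n:ℝ)^(-β) ≤ w j * w (n-1-j) * (j:ℝ)^(-β) := by
      calc (1-ε')*(1-ε')*(n:ℝ)^(-β) ≤ (1-ε')*(1-ε')*(j:ℝ)^(-β) :=
            mul_le_mul_of_nonneg_left hjpow (mul_nonneg (by linarith) (by linarith))
        _ ≤ w j * w (n-1-j) * (j:ℝ)^(-β) := mul_le_mul_of_nonneg_right m1 hjpow0
    calc (1-ε')^2 * (n:ℝ)^(-β) * ((n-1-j:ℕ):ℝ)^(-β)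
        = ((1-ε')*(1-ε')*(n:ℝ)^(-β)) * ((n-1-j:ℕ):ℝ)^(-β) := by ring
      _ ≤ (w j * w (n-1-j) * (j:ℝ)^(-β)) * ((n-1-j:ℕ):ℝ)^(-β) :=
          mul_le_mul_of_nonneg_right m2 hkpow0
  have hB2u : ∑ j ∈ Finset.Icc (J+1) (n-2-J), (w j * w (n-1-j) * (j:ℝ)^(-β) * ((n-1-j:ℕ):ℝ)^(-β))
      ≤ (n:ℝ) * ((1+ε')^2 * ((δ*(n:ℝ))^(-β) * (δ*(n:ℝ))^(-β))) := by
    have hbound : ∀ j ∈ Finset.Icc (J+1) (n-2-J),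
        w j * w (n-1-j) * (j:ℝ)^(-β) * ((n-1-j:ℕ):ℝ)^(-β)
          ≤ (1+ε')^2 * ((δ*(n:ℝ))^(-β) * (δ*(n:ℝ))^(-β)) := by
      intro j hj
      rw [Finset.mem_Icc] at hj
      have hwj := hwub j (by omega)
      have hwk := hwub (n-1-j) (by omega)
      have hwj0 : (0:ℝ) ≤ w j := hwnn j (by omega)
      have hwk0 : (0:ℝ) ≤ w (n-1-j) := hwnn (n-1-j) (by omega)
      have hjge : δ*(n:ℝ) ≤ (j:ℝ) := by
        have : ((J+1:ℕ):ℝ) ≤ (j:ℝ) := Nat.cast_le.2 hj.1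
        push_cast at this
        linarith
      have hkge : δ*(n:ℝ) ≤ ((n-1-j:ℕ):ℝ) := by
        have : ((J+1:ℕ):ℝ) ≤ ((n-1-j:ℕ):ℝ) := Nat.cast_le.2 (by omega)
        push_cast at this
        linarith
      have hjpow : (j:ℝ)^(-β) ≤ (δ*(n:ℝ))^(-β) :=
        Real.rpow_le_rpow_of_nonpos hδn0 hjge (by linarith)
      have hkpow : ((n-1-j:ℕ):ℝ)^(-β) ≤ (δ*(n:ℝ))^(-β) :=
        Real.rpow_le_rpow_of_nonpos hδn0 hkge (by linarith)
      have hjpow0 : (0:ℝ) ≤ (j:ℝ)^(-β) := Real.rpow_nonneg (Nat.cast_nonneg j) _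
      have hkpow0 : (0:ℝ) ≤ ((n-1-j:ℕ):ℝ)^(-β) := Real.rpow_nonneg (Nat.cast_nonneg _) _
      have m1 : w j * w (n-1-j) ≤ (1+ε')*(1+ε') := mul_le_mul hwj hwk hwk0 (by linarith)
      have m2 : w j * w (n-1-j) * (j:ℝ)^(-β) ≤ (1+ε')*(1+ε')*(δ*(n:ℝ))^(-β) :=
        (mul_le_mul_of_nonneg_right m1 hjpow0).trans
          (mul_le_mul_of_nonneg_left hjpow (mul_nonneg (by linarith) (by linarith)))
      calc w j * w (n-1-j) * (j:ℝ)^(-β) * ((n-1-j:ℕ):ℝ)^(-β)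
          ≤ ((1+ε')*(1+ε')*(δ*(n:ℝ))^(-β)) * (δ*(n:ℝ))^(-β) :=
            mul_le_mul m2 hkpow hkpow0 (by positivity)
        _ = (1+ε')^2 * ((δ*(n:ℝ))^(-β) * (δ*(n:ℝ))^(-β)) := by ring
    have hcard : ((Finset.Icc (J+1) (n-2-J)).card : ℝ) ≤ (n:ℝ) := by
      rw [Nat.card_Icc]
      exact_mod_cast Nat.cast_le.2 (by omega : (n-2-J+1) - (J+1) ≤ n)
    have hb0 : (0:ℝ) ≤ (1+ε')^2 * ((δ*(n:ℝ))^(-β) * (δ*(n:ℝ))^(-β)) := by positivity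
    calc ∑ j ∈ Finset.Icc (J+1) (n-2-J), (w j * w (n-1-j) * (j:ℝ)^(-β) * ((n-1-j:ℕ):ℝ)^(-β))
        ≤ (Finset.Icc (J+1) (n-2-J)).card • ((1+ε')^2 * ((δ*(n:ℝ))^(-β) * (δ*(n:ℝ))^(-β))) :=
          Finset.sum_le_card_nsmul _ _ _ hbound
      _ = ((Finset.Icc (J+1) (n-2-J)).card : ℝ) * ((1+ε')^2 * ((δ*(n:ℝ))^(-β) * (δ*(n:ℝ))^(-β))) := by
          rw [nsmul_eq_mul]
      _ ≤ (n:ℝ) * ((1+ε')^2 * ((δ*(n:ℝ))^(-β) * (δ*(n:ℝ))^(-β))) :=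
          mul_le_mul_of_nonneg_right hcard hb0
  have hB2l : (0:ℝ) ≤ ∑ j ∈ Finset.Icc (J+1) (n-2-J),
      (w j * w (n-1-j) * (j:ℝ)^(-β) * ((n-1-j:ℕ):ℝ)^(-β)) := by
    apply Finset.sum_nonneg
    intro j hj
    rw [Finset.mem_Icc] at hj
    have hwj0 : (0:ℝ) ≤ w j := hwnn j (by omega)
    have hwk0 : (0:ℝ) ≤ w (n-1-j) := hwnn (n-1-j) (by omega)
    have hjpow0 : (0:ℝ) ≤ (j:ℝ)^(-β) := Real.rpow_nonneg (Nat.cast_nonneg j) _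
    have hkpow0 : (0:ℝ) ≤ ((n-1-j:ℕ):ℝ)^(-β) := Real.rpow_nonneg (Nat.cast_nonneg _) _
    positivity
  -- middle block comparison with Q
  have hmid : (n:ℝ) * ((δ*(n:ℝ))^(-β) * (δ*(n:ℝ))^(-β)) ≤ ε' * Q := by
    have i4 : (δ*(n:ℝ))^(-β) * (δ*(n:ℝ))^(-β) = δ^(-(2*β)) * (n:ℝ)^(-(2*β)) := by
      rw [← Real.rpow_add hδn0, show -β + -β = -(2*β) from by ring,
        Real.mul_rpow hδ0.le hn0.le]
    have i3b : (n:ℝ) * (n:ℝ)^(-(2*β)) = (n:ℝ)^(1-2*β) := by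
      rw [show (1:ℝ)-2*β = 1 + -(2*β) from by ring, Real.rpow_add hn0, Real.rpow_one]
    have i1 : (f n/(n:ℝ))^(β-1) = f n ^ (β-1) * (n:ℝ)^(1-β) := by
      rw [Real.div_rpow hf0.le hn0.le, div_eq_mul_inv, ← Real.rpow_neg hn0.le,
        show -(β-1) = 1-β from by ring]
    have huv : f n ^ (β-1) * f n ^ (1-β) = 1 := by
      rw [← Real.rpow_add hf0]; norm_num
    have hst : (n:ℝ)^(1-β) * (n:ℝ)^(-β) = (n:ℝ)^(1-2*β) := by
      rw [← Real.rpow_add hn0, show (1:ℝ)-β + -β = 1-2*β from by ring]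
    have hcc : (β-1) * (β-1)⁻¹ = 1 := mul_inv_cancel₀ hβ1.ne'
    have claim : (n:ℝ) * ((δ*(n:ℝ))^(-β) * (δ*(n:ℝ))^(-β))
        = ((β-1) * δ^(-(2*β)) * (f n/(n:ℝ))^(β-1)) * Q := by
      rw [i4, hQdef, i1]
      calc (n:ℝ) * (δ^(-(2*β)) * (n:ℝ)^(-(2*β)))
          = δ^(-(2*β)) * ((n:ℝ) * (n:ℝ)^(-(2*β))) := by ring
        _ = δ^(-(2*β)) * (n:ℝ)^(1-2*β) := by rw [i3b]
        _ = δ^(-(2*β)) * ((f n ^ (β-1) * f n ^ (1-β)) * (((n:ℝ)^(1-β) * (n:ℝ)^(-β))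
              * ((β-1) * (β-1)⁻¹))) := by rw [huv, hst, hcc]; ring
        _ = ((β-1) * δ^(-(2*β)) * (f n ^ (β-1) * (n:ℝ)^(1-β)))
              * ((n:ℝ)^(-β) * (f n ^ (1-β) / (β-1))) := by
              rw [div_eq_mul_inv]; ring
    rw [claim]
    exact mul_le_mul_of_nonneg_right (le_of_lt h6) hQpos.le
  -- assemble
  have hsum := hsplit (fun j => w j * w (n-1-j) * (j:ℝ)^(-β) * ((n-1-j:ℕ):ℝ)^(-β))
  have hU : ∑ j ∈ Finset.Icc F R, (w j * w (n-1-j) * (j:ℝ)^(-β) * ((n-1-j:ℕ):ℝ)^(-β))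
      ≤ (2*(1+ε')^4 + (1+ε')^2*ε') * Q := by
    rw [hsum]
    have u1 : ∑ j ∈ Finset.Icc F J, (w j * w (n-1-j) * (j:ℝ)^(-β) * ((n-1-j:ℕ):ℝ)^(-β))
        ≤ (1+ε')^4 * Q := by
      refine le_trans hB1u ?_
      rw [hQdef]
      have := mul_le_mul_of_nonneg_left htail_ub
        (by positivity : (0:ℝ) ≤ (1+ε')^3 * (n:ℝ)^(-β))
      calc (1+ε')^3 * (n:ℝ)^(-β) * ∑ j ∈ Finset.Icc F J, (j:ℝ)^(-β)
          ≤ (1+ε')^3 * (n:ℝ)^(-β) * ((1+ε') * (f n ^ (1-β)/(β-1))) := this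
        _ = (1+ε')^4 * ((n:ℝ)^(-β) * (f n ^ (1-β)/(β-1))) := by ring
    have u3 : ∑ j ∈ Finset.Icc (n-1-J) R, (w j * w (n-1-j) * (j:ℝ)^(-β) * ((n-1-j:ℕ):ℝ)^(-β))
        ≤ (1+ε')^4 * Q := by
      refine le_trans hB3u ?_
      rw [hrefl, hQdef]
      have := mul_le_mul_of_nonneg_left htail_ub
        (by positivity : (0:ℝ) ≤ (1+ε')^3 * (n:ℝ)^(-β))
      calc (1+ε')^3 * (n:ℝ)^(-β) * ∑ j ∈ Finset.Icc F J, (j:ℝ)^(-β)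
          ≤ (1+ε')^3 * (n:ℝ)^(-β) * ((1+ε') * (f n ^ (1-β)/(β-1))) := this
        _ = (1+ε')^4 * ((n:ℝ)^(-β) * (f n ^ (1-β)/(β-1))) := by ring
    have u2 : ∑ j ∈ Finset.Icc (J+1) (n-2-J), (w j * w (n-1-j) * (j:ℝ)^(-β) * ((n-1-j:ℕ):ℝ)^(-β))
        ≤ (1+ε')^2 * ε' * Q := by
      refine le_trans hB2u ?_
      calc (n:ℝ) * ((1+ε')^2 * ((δ*(n:ℝ))^(-β) * (δ*(n:ℝ))^(-β)))
          = (1+ε')^2 * ((n:ℝ) * ((δ*(n:ℝ))^(-β) * (δ*(n:ℝ))^(-β))) := by ring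
        _ ≤ (1+ε')^2 * (ε' * Q) := mul_le_mul_of_nonneg_left hmid (by positivity)
        _ = (1+ε')^2 * ε' * Q := by ring
    linarith
  have hL : (2*(1-ε')^2*(1-2*ε')) * Q
      ≤ ∑ j ∈ Finset.Icc F R, (w j * w (n-1-j) * (j:ℝ)^(-β) * ((n-1-j:ℕ):ℝ)^(-β)) := by
    rw [hsum]
    have l1 : (1-ε')^2*(1-2*ε') * Q
        ≤ ∑ j ∈ Finset.Icc F J, (w j * w (n-1-j) * (j:ℝ)^(-β) * ((n-1-j:ℕ):ℝ)^(-β)) := by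
      refine le_trans ?_ hB1l
      rw [hQdef]
      have := mul_le_mul_of_nonneg_left htail_lb
        (by positivity : (0:ℝ) ≤ (1-ε')^2 * (n:ℝ)^(-β))
      calc (1-ε')^2*(1-2*ε') * ((n:ℝ)^(-β) * (f n ^ (1-β)/(β-1)))
          = (1-ε')^2 * (n:ℝ)^(-β) * ((1-2*ε') * (f n ^ (1-β)/(β-1))) := by ring
        _ ≤ (1-ε')^2 * (n:ℝ)^(-β) * ∑ j ∈ Finset.Icc F J, (j:ℝ)^(-β) := this
    have l3 : (1-ε')^2*(1-2*ε') * Q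
        ≤ ∑ j ∈ Finset.Icc (n-1-J) R, (w j * w (n-1-j) * (j:ℝ)^(-β) * ((n-1-j:ℕ):ℝ)^(-β)) := by
      refine le_trans ?_ hB3l
      rw [hrefl, hQdef]
      have := mul_le_mul_of_nonneg_left htail_lb
        (by positivity : (0:ℝ) ≤ (1-ε')^2 * (n:ℝ)^(-β))
      calc (1-ε')^2*(1-2*ε') * ((n:ℝ)^(-β) * (f n ^ (1-β)/(β-1)))
          = (1-ε')^2 * (n:ℝ)^(-β) * ((1-2*ε') * (f n ^ (1-β)/(β-1))) := by ring
        _ ≤ (1-ε')^2 * (n:ℝ)^(-β) * ∑ j ∈ Finset.Icc F J, (j:ℝ)^(-β) := this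
    linarith
  have hD : 2 * f n ^ (1-β) * (n:ℝ)^(-β) / (β-1) = 2 * Q := by
    rw [hQdef]; ring
  rw [Real.dist_eq, hD, abs_lt]
  have hQ2 : (0:ℝ) < 2 * Q := by linarith
  have ht2 : ε'^2 ≤ ε'/40 := by
    have h := mul_le_mul_of_nonneg_left hε'small hε'pos.le
    rw [sq]; linarith
  have ht3 : ε'^3 ≤ ε'/1600 := by
    have h := mul_le_mul_of_nonneg_left ht2 hε'pos.le
    have h2 : ε' * (ε'/40) ≤ (ε'/40)/40 := by linarith [ht2]
    calc ε'^3 = ε' * ε'^2 := by ring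
      _ ≤ ε' * (ε'/40) := h
      _ ≤ ε'/1600 := by linarith
  have ht4 : ε'^4 ≤ ε'/64000 := by
    have h := mul_le_mul_of_nonneg_left ht3 hε'pos.le
    have h2 : ε' * (ε'/1600) ≤ (ε'/40)/1600 := by linarith [ht2]
    calc ε'^4 = ε' * ε'^3 := by ring
      _ ≤ ε' * (ε'/1600) := h
      _ ≤ ε'/64000 := by linarith
  constructor
  · have hcl : (1-ε)*(2*Q) < (2*(1-ε')^2*(1-2*ε')) * Q := by
      have hco : (1-ε)*2 < 2*(1-ε')^2*(1-2*ε') := by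
        have hexpand : 2*(1-ε')^2*(1-2*ε') = 2 - 8*ε' + 10*ε'^2 - 4*ε'^3 := by ring
        rw [hexpand]
        linarith [ht3, sq_nonneg ε', hε'le, hε, hε'pos]
      calc (1-ε)*(2*Q) = ((1-ε)*2)*Q := by ring
        _ < (2*(1-ε')^2*(1-2*ε')) * Q := mul_lt_mul_of_pos_right hco hQpos
    have : 1 - ε < (∑ j ∈ Finset.Icc F R,
        (w j * w (n-1-j) * (j:ℝ)^(-β) * ((n-1-j:ℕ):ℝ)^(-β))) / (2*Q) := by
      rw [lt_div_iff₀ hQ2]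
      calc (1-ε)*(2*Q) < (2*(1-ε')^2*(1-2*ε')) * Q := hcl
        _ ≤ _ := hL
    linarith
  · have hco : 2*(1+ε')^4 + (1+ε')^2*ε' < (1+ε)*2 := by
      have hexpand : 2*(1+ε')^4 + (1+ε')^2*ε'
          = 2 + 9*ε' + 14*ε'^2 + 9*ε'^3 + 2*ε'^4 := by ring
      rw [hexpand]
      linarith [ht2, ht3, ht4, hε'le, hε, hε'pos]
    have : (∑ j ∈ Finset.Icc F R,
        (w j * w (n-1-j) * (j:ℝ)^(-β) * ((n-1-j:ℕ):ℝ)^(-β))) / (2*Q) < 1 + ε := by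
      rw [div_lt_iff₀ hQ2]
      calc _ ≤ (2*(1+ε')^4 + (1+ε')^2*ε') * Q := hU
        _ < ((1+ε)*2)*Q := mul_lt_mul_of_pos_right hco hQpos
        _ = (1+ε)*(2*Q) := by ring
    linarith


set_option maxHeartbeats 2000000 in
theorem bridge_sum_asymptotics (α c γ : ℝ) (hα : 2 < α) (hc : 0 < c) (hγ : 0 < γ)
    (f : ℕ → ℝ) (hf : Tendsto f atTop atTop)
    (hfo : Tendsto (fun n => f n / (n : ℝ)) atTop (nhds 0))
    (m : ℕ → ℝ) (hm : ∀ i, 1 ≤ i → 0 < m i)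
    (hasy : Tendsto
      (fun i : ℕ => m i / (c * (i : ℝ) ^ (-α) * γ ^ i * (Nat.factorial (2 * i) : ℝ)))
      atTop (nhds 1)) :
    Tendsto (fun n : ℕ =>
        ((1 / m n) * ∑ p ∈ (Finset.range n ×ˢ Finset.range n).filter
            (fun p => p.1 + p.2 = n - 1 ∧ 1 ≤ p.1 ∧ 1 ≤ p.2 ∧
              f n ≤ (p.1 : ℝ) ∧ f n ≤ (p.2 : ℝ)),
          (Nat.choose (2 * n - 2) (2 * p.1) : ℝ) * m p.1 * m p.2 * (p.1 : ℝ) * (p.2 : ℝ)) /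
        (c / (2 * γ * (α - 2)) * (1 / (f n ^ (α - 2) * (n : ℝ)))))
      atTop (nhds 1) := by
  set a : ℕ → ℝ := fun i : ℕ => m i / (c * (i : ℝ) ^ (-α) * γ ^ i * (Nat.factorial (2 * i) : ℝ))
    with hadef
  have hα2 : (0:ℝ) < α - 2 := by linarith
  have hden_pos : ∀ i : ℕ, 1 ≤ i → (0:ℝ) < c * (i : ℝ) ^ (-α) * γ ^ i * (Nat.factorial (2 * i) : ℝ) := by
    intro i hi
    have hi0 : (0:ℝ) < (i:ℝ) := by exact_mod_cast hi
    have := Real.rpow_pos_of_pos hi0 (-α)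
    have hfp : (0:ℝ) < (Nat.factorial (2 * i) : ℝ) := by exact_mod_cast Nat.factorial_pos _
    positivity
  have ha_pos : ∀ i : ℕ, 1 ≤ i → 0 < a i := by
    intro i hi
    rw [hadef]
    exact div_pos (hm i hi) (hden_pos i hi)
  have hm_eq : ∀ i : ℕ, 1 ≤ i →
      m i = a i * (c * (i : ℝ) ^ (-α) * γ ^ i * (Nat.factorial (2 * i) : ℝ)) := by
    intro i hi
    rw [hadef]
    field_simp
  -- the G factor
  have hG : Tendsto (fun n : ℕ => (2*(n:ℝ)/(2*(n:ℝ)-1)) * (a n)⁻¹) atTop (nhds 1) := by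
    have h1 : Tendsto (fun n : ℕ => 2*(n:ℝ)/(2*(n:ℝ)-1)) atTop (nhds 1) := by
      have hden : Tendsto (fun n : ℕ => 2*(n:ℝ)-1) atTop atTop := by
        have h2 : Tendsto (fun n : ℕ => 2*(n:ℝ)) atTop atTop :=
          (tendsto_natCast_atTop_atTop (R := ℝ)).const_mul_atTop two_pos
        simpa [sub_eq_add_neg] using tendsto_atTop_add_const_right atTop (-1) h2
      have hinv := tendsto_inv_atTop_zero.comp hden
      have h3 : Tendsto (fun n : ℕ => 1 + (2*(n:ℝ)-1)⁻¹) atTop (nhds 1) := by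
        have := (tendsto_const_nhds (α := ℕ) (x := (1:ℝ))).add hinv
        simpa using this
      refine h3.congr' ?_
      filter_upwards [eventually_ge_atTop 1] with n hn1
      have hn0 : (1:ℝ) ≤ (n:ℝ) := by exact_mod_cast hn1
      have : (2*(n:ℝ)-1) ≠ 0 := by linarith
      field_simp
      ring
    have h2 : Tendsto (fun n : ℕ => (a n)⁻¹) atTop (nhds 1) := by
      have := hasy.inv₀ one_ne_zero
      simpa using this
    simpa using h1.mul h2
  have hSM := SM α hα f hf hfo a hasy
  have key := hSM.mul hG
  rw [mul_one] at key
  refine key.congr' ?_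
  filter_upwards [hf.eventually_ge_atTop 1, eventually_ge_atTop 1] with n hf1 hn1
  -- notation
  have hn0 : (0:ℝ) < (n:ℝ) := by exact_mod_cast hn1
  have hfn0 : (0:ℝ) < f n := by linarith
  have han : 0 < a n := ha_pos n hn1
  have hmn : 0 < m n := hm n hn1
  set F := ⌈f n⌉₊ with hFdef
  -- rewrite the pair sum
  have hpair := pair_sum_eq (f n) n hf1
    (fun j k => (Nat.choose (2 * n - 2) (2 * j) : ℝ) * m j * m k * (j : ℝ) * (k : ℝ))
  have hterm : ∀ j ∈ Finset.Icc F (n - 1 - F),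
      (Nat.choose (2 * n - 2) (2 * j) : ℝ) * m j * m (n-1-j) * (j : ℝ) * ((n-1-j : ℕ) : ℝ)
        = c^2 * γ^(n-1) * (Nat.factorial (2*n-2) : ℝ) *
          (a j * a (n-1-j) * (j:ℝ)^(1-α) * ((n-1-j:ℕ):ℝ)^(1-α)) := by
    intro j hj
    rw [Finset.mem_Icc] at hj
    have hF1 : 1 ≤ F := Nat.one_le_ceil_iff.2 (by linarith)
    have hj1 : 1 ≤ j := le_trans hF1 hj.1
    have hk1 : 1 ≤ n - 1 - j := by omega
    have hj0 : (0:ℝ) < (j:ℝ) := by exact_mod_cast hj1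
    have hk0 : (0:ℝ) < ((n-1-j:ℕ):ℝ) := by exact_mod_cast hk1
    have hCnat : Nat.choose (2*n-2) (2*j) * Nat.factorial (2*j) * Nat.factorial (2*(n-1-j))
        = Nat.factorial (2*n-2) := by
      have h2j : 2*j ≤ 2*n-2 := by omega
      have := Nat.choose_mul_factorial_mul_factorial h2j
      rwa [show 2*n-2-(2*j) = 2*(n-1-j) from by omega] at this
    have hC : (Nat.choose (2*n-2) (2*j) : ℝ) * (Nat.factorial (2*j) : ℝ)
        * (Nat.factorial (2*(n-1-j)) : ℝ) = (Nat.factorial (2*n-2) : ℝ) := by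
      exact_mod_cast hCnat
    have hγjk : γ^j * γ^(n-1-j) = γ^(n-1) := by
      rw [← pow_add, show j + (n-1-j) = n-1 from by omega]
    have hjp : (j:ℝ)^(-α) * (j:ℝ) = (j:ℝ)^(1-α) := by
      rw [show (1:ℝ)-α = -α+1 from by ring, Real.rpow_add hj0, Real.rpow_one]
    have hkp : ((n-1-j:ℕ):ℝ)^(-α) * ((n-1-j:ℕ):ℝ) = ((n-1-j:ℕ):ℝ)^(1-α) := by
      rw [show (1:ℝ)-α = -α+1 from by ring, Real.rpow_add hk0, Real.rpow_one]
    rw [hm_eq j hj1, hm_eq (n-1-j) hk1]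
    calc (Nat.choose (2*n-2) (2*j) : ℝ)
          * (a j * (c * (j:ℝ)^(-α) * γ^j * (Nat.factorial (2*j) : ℝ)))
          * (a (n-1-j) * (c * ((n-1-j:ℕ):ℝ)^(-α) * γ^(n-1-j) * (Nat.factorial (2*(n-1-j)) : ℝ)))
          * (j:ℝ) * ((n-1-j:ℕ):ℝ)
        = ((Nat.choose (2*n-2) (2*j) : ℝ) * (Nat.factorial (2*j) : ℝ)
            * (Nat.factorial (2*(n-1-j)) : ℝ)) * (γ^j * γ^(n-1-j)) * (c*c)
            * (a j * a (n-1-j)) * ((j:ℝ)^(-α) * (j:ℝ)) * (((n-1-j:ℕ):ℝ)^(-α) * ((n-1-j:ℕ):ℝ)) := by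
          ring
      _ = c^2 * γ^(n-1) * (Nat.factorial (2*n-2) : ℝ) *
            (a j * a (n-1-j) * (j:ℝ)^(1-α) * ((n-1-j:ℕ):ℝ)^(1-α)) := by
          rw [hC, hγjk, hjp, hkp]; ring
  have hsum_eq : ∑ p ∈ (Finset.range n ×ˢ Finset.range n).filter
        (fun p => p.1 + p.2 = n - 1 ∧ 1 ≤ p.1 ∧ 1 ≤ p.2 ∧
          f n ≤ (p.1 : ℝ) ∧ f n ≤ (p.2 : ℝ)),
      (Nat.choose (2 * n - 2) (2 * p.1) : ℝ) * m p.1 * m p.2 * (p.1 : ℝ) * (p.2 : ℝ)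
      = c^2 * γ^(n-1) * (Nat.factorial (2*n-2) : ℝ) *
        ∑ j ∈ Finset.Icc F (n-1-F),
          (a j * a (n-1-j) * (j:ℝ)^(1-α) * ((n-1-j:ℕ):ℝ)^(1-α)) := by
    rw [hpair, Finset.mul_sum]
    exact Finset.sum_congr rfl hterm
  rw [hsum_eq]
  -- now pure algebra
  have hfact : ((Nat.factorial (2*n)) : ℝ)
      = (2*(n:ℝ)) * (2*(n:ℝ)-1) * (Nat.factorial (2*n-2) : ℝ) := by
    have h2n : 2*n = (2*n-2) + 1 + 1 := by omega
    rw [h2n, Nat.factorial_succ, Nat.factorial_succ]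
    have hc2 : ((2*n-2:ℕ):ℝ) = 2*(n:ℝ)-2 := by
      rw [Nat.cast_sub (by omega : 2 ≤ 2*n)]
      push_cast; ring
    push_cast [hc2]
    ring
  have hγn : γ^n = γ * γ^(n-1) := by
    rw [← pow_succ']
    congr 1
    omega
  have hnp : (n:ℝ)^(1-α) = (n:ℝ)^(-α) * (n:ℝ) := by
    rw [show (1:ℝ)-α = -α+1 from by ring, Real.rpow_add hn0, Real.rpow_one]
  have hfp : f n ^ (2-α) = (f n ^ (α-2))⁻¹ := by
    rw [show (2:ℝ)-α = -(α-2) from by ring, Real.rpow_neg hfn0.le]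
  have hmn_eq := hm_eq n hn1
  have hfact_pos : (0:ℝ) < (Nat.factorial (2*n-2) : ℝ) := by exact_mod_cast Nat.factorial_pos _
  have hnpow_pos : (0:ℝ) < (n:ℝ)^(-α) := Real.rpow_pos_of_pos hn0 _
  have hfpow_pos : (0:ℝ) < f n ^ (α-2) := Real.rpow_pos_of_pos hfn0 _
  have h2n1 : (2*(n:ℝ)-1) ≠ 0 := by
    have : (1:ℝ) ≤ (n:ℝ) := by exact_mod_cast hn1
    intro hcon; linarith
  rw [hmn_eq, hfact, hγn, hnp, hfp]
  field_simp
end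

section
/- Let α > 2 be a real constant and let f : ℕ → ℝ satisfy f(n) → ∞ and f(n)/n → 0 as n → ∞. Then, as n → ∞, Σ_{(j,k) ∈ ℤ_{≥1}², j+k = n−1, j ≥ f(n), k ≥ f(n)} j^{1−α}·k^{1−α} = (1+o(1))·(2/(α−2))·f(n)^{2−α}·n^{1−α}. -/
open Filter Finset

private lemma mvt_step {α a b : ℝ} (hα : 2 < α) (ha : 0 < a) (hab : a < b) :
    (b - a) * b ^ (1 - α) ≤ (a ^ (2 - α) - b ^ (2 - α)) / (α - 2) ∧
      (a ^ (2 - α) - b ^ (2 - α)) / (α - 2) ≤ (b - a) * a ^ (1 - α) := by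
  obtain ⟨c, hc, hE⟩ := exists_hasDerivAt_eq_slope (fun x : ℝ => x ^ (2 - α))
    (fun x : ℝ => (2 - α) * x ^ (2 - α - 1)) hab
    (fun x hx => (Real.continuousAt_rpow_const x (2 - α)
      (Or.inl (ha.trans_le hx.1).ne')).continuousWithinAt)
    (fun x hx => Real.hasDerivAt_rpow_const (Or.inl (ha.trans hx.1).ne'))
  have hc0 : 0 < c := ha.trans hc.1
  have hba : (0:ℝ) < b - a := by linarith [hab]
  have h21 : 2 - α - 1 = 1 - α := by ring
  rw [h21] at hE
  have h1 : (2 - α) * c ^ (1 - α) * (b - a) = b ^ (2 - α) - a ^ (2 - α) := by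
    rw [hE]; field_simp
  have hid : (a ^ (2 - α) - b ^ (2 - α)) / (α - 2) = (b - a) * c ^ (1 - α) := by
    rw [div_eq_iff (by linarith : α - 2 ≠ 0)]
    linear_combination h1
  have hneg : 1 - α ≤ 0 := by linarith
  constructor
  · rw [hid]
    exact mul_le_mul_of_nonneg_left
      (Real.rpow_le_rpow_of_nonpos hc0 hc.2.le hneg) hba.le
  · rw [hid]
    exact mul_le_mul_of_nonneg_left
      (Real.rpow_le_rpow_of_nonpos ha hc.1.le hneg) hba.le

private lemma sum_upper {α : ℝ} (hα : 2 < α) (a b : ℕ) (ha : 2 ≤ a) :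
    ∑ j ∈ Finset.Ico a b, (j : ℝ) ^ (1 - α) ≤ ((a : ℝ) - 1) ^ (2 - α) / (α - 2) := by
  have ha1 : (1:ℝ) ≤ (a:ℝ) - 1 := by
    have : (2:ℝ) ≤ (a:ℝ) := by exact_mod_cast ha
    linarith
  set u : ℕ → ℝ := fun i => ((a : ℝ) - 1 + i) ^ (2 - α) / (α - 2) with hu
  rw [Finset.sum_Ico_eq_sum_range]
  have key : ∀ i ∈ Finset.range (b - a), ((a + i : ℕ) : ℝ) ^ (1 - α) ≤ u i - u (i + 1) := by
    intro i _
    have h := (mvt_step hα (a := (a:ℝ) - 1 + i) (b := (a:ℝ) + i) (by positivity)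
      (by linarith)).1
    have e1 : ((a:ℝ) + i) - ((a:ℝ) - 1 + i) = 1 := by ring
    rw [e1, one_mul] at h
    have e2 : u i - u (i + 1) = (((a:ℝ) - 1 + i) ^ (2 - α) - ((a:ℝ) + i) ^ (2 - α)) / (α - 2) := by
      rw [hu]; push_cast; ring_nf
    rw [e2]
    calc ((a + i : ℕ) : ℝ) ^ (1 - α) = ((a:ℝ) + i) ^ (1 - α) := by push_cast; ring_nf
      _ ≤ _ := h
  calc ∑ i ∈ Finset.range (b - a), ((a + i : ℕ) : ℝ) ^ (1 - α)
      ≤ ∑ i ∈ Finset.range (b - a), (u i - u (i + 1)) := Finset.sum_le_sum key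
    _ = u 0 - u (b - a) := Finset.sum_range_sub' u (b - a)
    _ ≤ u 0 := by
        have : 0 ≤ u (b - a) := by
          simp only [hu]
          have h3 : (0:ℝ) ≤ ((b - a : ℕ) : ℝ) := by positivity
          apply div_nonneg (Real.rpow_nonneg (by linarith) _) (by linarith)
        linarith
    _ = ((a : ℝ) - 1) ^ (2 - α) / (α - 2) := by simp only [hu]; norm_num

private lemma sum_lower {α : ℝ} (hα : 2 < α) (a b : ℕ) (ha : 1 ≤ a) (hab : a ≤ b) :
    ((a : ℝ) ^ (2 - α) - (b : ℝ) ^ (2 - α)) / (α - 2) ≤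
      ∑ j ∈ Finset.Ico a b, (j : ℝ) ^ (1 - α) := by
  have ha0 : (0:ℝ) < (a:ℝ) := by exact_mod_cast ha
  set u : ℕ → ℝ := fun i => ((a : ℝ) + i) ^ (2 - α) / (α - 2) with hu
  rw [Finset.sum_Ico_eq_sum_range]
  have key : ∀ i ∈ Finset.range (b - a), u i - u (i + 1) ≤ ((a + i : ℕ) : ℝ) ^ (1 - α) := by
    intro i _
    have h := (mvt_step hα (a := (a:ℝ) + i) (b := (a:ℝ) + i + 1) (by positivity)
      (by linarith)).2
    have e1 : ((a:ℝ) + i + 1) - ((a:ℝ) + i) = 1 := by ring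
    rw [e1, one_mul] at h
    have e2 : u i - u (i + 1) = (((a:ℝ) + i) ^ (2 - α) - ((a:ℝ) + i + 1) ^ (2 - α)) / (α - 2) := by
      rw [hu]; push_cast; ring_nf
    rw [e2]
    calc (((a:ℝ) + i) ^ (2 - α) - ((a:ℝ) + i + 1) ^ (2 - α)) / (α - 2)
        ≤ ((a:ℝ) + i) ^ (1 - α) := h
      _ = ((a + i : ℕ) : ℝ) ^ (1 - α) := by push_cast; ring_nf
  calc ((a : ℝ) ^ (2 - α) - (b : ℝ) ^ (2 - α)) / (α - 2)
      = u 0 - u (b - a) := by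
        simp only [hu]
        push_cast [Nat.cast_sub hab]
        ring_nf
    _ = ∑ i ∈ Finset.range (b - a), (u i - u (i + 1)) := (Finset.sum_range_sub' u (b - a)).symm
    _ ≤ _ := Finset.sum_le_sum key

private lemma sum_eq_aux (α F : ℝ) (n : ℕ) (hF : 1 ≤ F) (hn : 2 ≤ n) :
    ∑ p ∈ (Finset.range n ×ˢ Finset.range n).filter
        (fun p => p.1 + p.2 = n - 1 ∧ 1 ≤ p.1 ∧ 1 ≤ p.2 ∧ F ≤ (p.1:ℝ) ∧ F ≤ (p.2:ℝ)),
      (p.1:ℝ)^(1-α) * (p.2:ℝ)^(1-α)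
    = ∑ j ∈ Finset.Ico ⌈F⌉₊ (n - 1 - ⌈F⌉₊ + 1),
        (j:ℝ)^(1-α) * ((n-1-j : ℕ):ℝ)^(1-α) := by
  have hJ1 : 1 ≤ ⌈F⌉₊ := Nat.ceil_pos.mpr (by linarith)
  apply Finset.sum_nbij' (i := fun p : ℕ × ℕ => p.1) (j := fun a : ℕ => (a, n - 1 - a))
  · intro p hp
    simp only [Finset.mem_filter, Finset.mem_product, Finset.mem_range] at hp
    obtain ⟨⟨hp1, hp2⟩, c1, c2, c3, c4, c5⟩ := hp
    have h4 : ⌈F⌉₊ ≤ p.1 := Nat.ceil_le.mpr c4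
    have h5 : ⌈F⌉₊ ≤ p.2 := Nat.ceil_le.mpr c5
    simp only [Finset.mem_Ico]
    omega
  · intro a ha
    simp only [Finset.mem_Ico] at ha
    obtain ⟨ha1, ha2⟩ := ha
    have hFa : F ≤ (a:ℝ) := le_trans (Nat.le_ceil F) (Nat.cast_le.mpr ha1)
    have hJa : ⌈F⌉₊ ≤ n - 1 - a := by omega
    have hFb : F ≤ ((n - 1 - a : ℕ):ℝ) := le_trans (Nat.le_ceil F) (Nat.cast_le.mpr hJa)
    simp only [Finset.mem_filter, Finset.mem_product, Finset.mem_range]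
    refine ⟨⟨by omega, by omega⟩, by omega, by omega, by omega, hFa, hFb⟩
  · intro p hp
    simp only [Finset.mem_filter, Finset.mem_product, Finset.mem_range] at hp
    obtain ⟨⟨hp1, hp2⟩, c1, c2, c3, c4, c5⟩ := hp
    have : n - 1 - p.1 = p.2 := by omega
    rw [this]
  · intro a _
    rfl
  · intro p hp
    simp only [Finset.mem_filter, Finset.mem_product, Finset.mem_range] at hp
    obtain ⟨⟨hp1, hp2⟩, c1, c2, c3, c4, c5⟩ := hp
    have : n - 1 - p.1 = p.2 := by omega
    rw [this]

private lemma sum_sym_aux (α : ℝ) (M a b : ℕ) (ha : 1 ≤ a) (hab : a ≤ b) (hbM : 2*b ≤ M + 1) :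
    ∑ j ∈ Finset.Ico (M - b + 1) (M - a + 1), (j:ℝ)^(1-α) * ((M-j:ℕ):ℝ)^(1-α)
    = ∑ j ∈ Finset.Ico a b, (j:ℝ)^(1-α) * ((M-j:ℕ):ℝ)^(1-α) := by
  apply Finset.sum_nbij' (i := fun j : ℕ => M - j) (j := fun j : ℕ => M - j)
  · intro x hx
    simp only [Finset.mem_Ico] at hx ⊢
    omega
  · intro x hx
    simp only [Finset.mem_Ico] at hx ⊢
    omega
  · intro x hx
    simp only [Finset.mem_Ico] at hx
    omega
  · intro x hx
    simp only [Finset.mem_Ico] at hx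
    omega
  · intro x hx
    simp only [Finset.mem_Ico] at hx
    have h1 : M - (M - x) = x := by omega
    rw [h1, mul_comm]


private lemma sandwich (α : ℝ) (hα : 2 < α) (M J K : ℕ)
    (hJ2 : 2 ≤ J) (hJK : J ≤ K) (hKM : 2*K ≤ M) :
    2 * (((J:ℝ)^(2-α) - (K:ℝ)^(2-α)) / (α-2)) * (M:ℝ)^(1-α)
      ≤ ∑ j ∈ Finset.Ico J (M - J + 1), (j:ℝ)^(1-α) * ((M-j:ℕ):ℝ)^(1-α)
    ∧ ∑ j ∈ Finset.Ico J (M - J + 1), (j:ℝ)^(1-α) * ((M-j:ℕ):ℝ)^(1-α)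
      ≤ 2 * (((J:ℝ)-1)^(2-α)/(α-2)) * ((M-K:ℕ):ℝ)^(1-α)
        + (M:ℝ) * ((K:ℝ)^(1-α) * (K:ℝ)^(1-α)) := by
  have hne : 1 - α ≤ 0 := by linarith
  set g : ℕ → ℝ := fun j => (j:ℝ)^(1-α) * ((M-j:ℕ):ℝ)^(1-α) with hg
  have e1 : ∑ j ∈ Finset.Ico J K, g j + ∑ j ∈ Finset.Ico K (M - K + 1), g j
      = ∑ j ∈ Finset.Ico J (M - K + 1), g j :=
    Finset.sum_Ico_consecutive g hJK (by omega)
  have e2 : ∑ j ∈ Finset.Ico J (M - K + 1), g j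
        + ∑ j ∈ Finset.Ico (M - K + 1) (M - J + 1), g j
      = ∑ j ∈ Finset.Ico J (M - J + 1), g j :=
    Finset.sum_Ico_consecutive g (by omega) (by omega)
  have esym : ∑ j ∈ Finset.Ico (M - K + 1) (M - J + 1), g j = ∑ j ∈ Finset.Ico J K, g j :=
    sum_sym_aux α M J K (by omega) hJK (by omega)
  -- lower bound on low part
  have hlow_lb : (( (J:ℝ)^(2-α) - (K:ℝ)^(2-α)) / (α-2)) * (M:ℝ)^(1-α)
      ≤ ∑ j ∈ Finset.Ico J K, g j := by
    have step : ∀ j ∈ Finset.Ico J K, (j:ℝ)^(1-α) * (M:ℝ)^(1-α) ≤ g j := by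
      intro j hj
      simp only [Finset.mem_Ico] at hj
      apply mul_le_mul_of_nonneg_left _ (Real.rpow_nonneg (Nat.cast_nonneg j) _)
      apply Real.rpow_le_rpow_of_nonpos _ _ hne
      · have : (1:ℕ) ≤ M - j := by omega
        exact_mod_cast Nat.pos_of_ne_zero (by omega)
      · exact_mod_cast Nat.sub_le M j
    calc (((J:ℝ)^(2-α) - (K:ℝ)^(2-α)) / (α-2)) * (M:ℝ)^(1-α)
        ≤ (∑ j ∈ Finset.Ico J K, (j:ℝ)^(1-α)) * (M:ℝ)^(1-α) := by
          apply mul_le_mul_of_nonneg_right (sum_lower hα J K (by omega) hJK)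
            (Real.rpow_nonneg (Nat.cast_nonneg M) _)
      _ = ∑ j ∈ Finset.Ico J K, (j:ℝ)^(1-α) * (M:ℝ)^(1-α) := by rw [Finset.sum_mul]
      _ ≤ _ := Finset.sum_le_sum step
  -- upper bound on low part
  have hlow_ub : ∑ j ∈ Finset.Ico J K, g j
      ≤ (((J:ℝ)-1)^(2-α)/(α-2)) * ((M-K:ℕ):ℝ)^(1-α) := by
    have step : ∀ j ∈ Finset.Ico J K, g j ≤ (j:ℝ)^(1-α) * ((M-K:ℕ):ℝ)^(1-α) := by
      intro j hj
      simp only [Finset.mem_Ico] at hj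
      apply mul_le_mul_of_nonneg_left _ (Real.rpow_nonneg (Nat.cast_nonneg j) _)
      apply Real.rpow_le_rpow_of_nonpos _ _ hne
      · have : (1:ℕ) ≤ M - K := by omega
        exact_mod_cast Nat.pos_of_ne_zero (by omega)
      · have : M - K ≤ M - j := by omega
        exact_mod_cast this
    calc ∑ j ∈ Finset.Ico J K, g j
        ≤ ∑ j ∈ Finset.Ico J K, (j:ℝ)^(1-α) * ((M-K:ℕ):ℝ)^(1-α) := Finset.sum_le_sum step
      _ = (∑ j ∈ Finset.Ico J K, (j:ℝ)^(1-α)) * ((M-K:ℕ):ℝ)^(1-α) := by rw [Finset.sum_mul]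
      _ ≤ _ := mul_le_mul_of_nonneg_right (sum_upper hα J K hJ2)
          (Real.rpow_nonneg (Nat.cast_nonneg _) _)
  -- mid bounds
  have hmid_nonneg : 0 ≤ ∑ j ∈ Finset.Ico K (M - K + 1), g j := by
    apply Finset.sum_nonneg
    intro j _
    exact mul_nonneg (Real.rpow_nonneg (Nat.cast_nonneg _) _)
      (Real.rpow_nonneg (Nat.cast_nonneg _) _)
  have hmid_ub : ∑ j ∈ Finset.Ico K (M - K + 1), g j
      ≤ (M:ℝ) * ((K:ℝ)^(1-α) * (K:ℝ)^(1-α)) := by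
    have hK0 : (0:ℝ) < (K:ℝ) := by exact_mod_cast (by omega : 0 < K)
    have step : ∀ j ∈ Finset.Ico K (M - K + 1), g j ≤ (K:ℝ)^(1-α) * (K:ℝ)^(1-α) := by
      intro j hj
      simp only [Finset.mem_Ico] at hj
      apply mul_le_mul
      · exact Real.rpow_le_rpow_of_nonpos hK0 (by exact_mod_cast hj.1) hne
      · apply Real.rpow_le_rpow_of_nonpos hK0 _ hne
        have : K ≤ M - j := by omega
        exact_mod_cast this
      · exact Real.rpow_nonneg (Nat.cast_nonneg _) _
      · exact Real.rpow_nonneg hK0.le _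
    calc ∑ j ∈ Finset.Ico K (M - K + 1), g j
        ≤ (Finset.Ico K (M - K + 1)).card • ((K:ℝ)^(1-α) * (K:ℝ)^(1-α)) :=
          Finset.sum_le_card_nsmul _ _ _ step
      _ = ((Finset.Ico K (M - K + 1)).card : ℝ) * ((K:ℝ)^(1-α) * (K:ℝ)^(1-α)) := by
          rw [nsmul_eq_mul]
      _ ≤ (M:ℝ) * ((K:ℝ)^(1-α) * (K:ℝ)^(1-α)) := by
          apply mul_le_mul_of_nonneg_right _
            (mul_nonneg (Real.rpow_nonneg hK0.le _) (Real.rpow_nonneg hK0.le _))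
          rw [Nat.card_Ico]
          exact_mod_cast (by omega : M - K + 1 - K ≤ M)
  constructor
  · have := hlow_lb
    nlinarith [hlow_lb, hmid_nonneg]
  · nlinarith [hlow_ub, hmid_ub]

set_option maxHeartbeats 2000000 in
theorem sum_two_index_asymptotics (α : ℝ) (hα : 2 < α)
    (f : ℕ → ℝ) (hf : Tendsto f atTop atTop)
    (hfo : Tendsto (fun n => f n / (n : ℝ)) atTop (nhds 0)) :
    Tendsto (fun n : ℕ =>
        (∑ p ∈ (Finset.range n ×ˢ Finset.range n).filter
            (fun p => p.1 + p.2 = n - 1 ∧ 1 ≤ p.1 ∧ 1 ≤ p.2 ∧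
              f n ≤ (p.1 : ℝ) ∧ f n ≤ (p.2 : ℝ)),
          (p.1 : ℝ) ^ (1 - α) * (p.2 : ℝ) ^ (1 - α)) /
        (2 / (α - 2) * f n ^ (2 - α) * (n : ℝ) ^ (1 - α)))
      atTop (nhds 1) := by
  have hα2 : (0:ℝ) < α - 2 := by linarith
  have hα1 : (0:ℝ) < α - 1 := by linarith
  set β : ℝ := (3*α - 2)/(4*(α-1)) with hβdef
  have hβpos : 0 < β := div_pos (by linarith) (by linarith)
  have hβ1 : β < 1 := by rw [hβdef, div_lt_one (by linarith)]; linarith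
  have hexp : α + 2*β*(1-α) = (2-α)/2 := by rw [hβdef]; field_simp; ring
  set r : ℕ → ℝ := fun n => ((n:ℝ) - 1)/f n with hrdef
  set K : ℕ → ℕ := fun n => ⌈f n * r n ^ β⌉₊ with hKdef
  set J : ℕ → ℕ := fun n => ⌈f n⌉₊ with hJdef
  have hf2 : ∀ᶠ n in atTop, 2 ≤ f n := hf.eventually_ge_atTop 2
  -- r tends to infinity
  have hr : Tendsto r atTop atTop := by
    have hpos : ∀ᶠ n in atTop, 0 < f n / (n:ℝ) := by
      filter_upwards [hf.eventually_gt_atTop 0, eventually_gt_atTop 0] with n h1 h2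
      exact div_pos h1 (by exact_mod_cast h2)
    have h1 : Tendsto (fun n => f n / (n:ℝ)) atTop (nhdsWithin 0 (Set.Ioi 0)) :=
      tendsto_nhdsWithin_iff.mpr ⟨hfo, hpos⟩
    have h2 : Tendsto (fun n : ℕ => (n:ℝ) / f n) atTop atTop := by
      apply h1.inv_tendsto_nhdsGT_zero.congr
      intro n
      simp [inv_div]
    apply tendsto_atTop_mono' atTop ?_ (tendsto_atTop_add_const_right _ (-1) h2)
    filter_upwards [hf2, eventually_ge_atTop 1] with n h1 h2
    have hfn : 0 < f n := by linarith
    have hre : r n = (n:ℝ)/f n - 1/f n := by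
      rw [show r n = ((n:ℝ)-1)/f n from rfl]
      ring
    have h4 : 1 / f n ≤ 1 := by rw [div_le_one hfn]; linarith
    rw [hre]
    linarith
  have hr1 : ∀ᶠ n in atTop, 1 ≤ r n := hr.eventually_ge_atTop 1
  -- K lower and upper bounds
  have hKlb : ∀ n, f n * r n ^ β ≤ (K n : ℝ) := fun n => Nat.le_ceil _
  have hKub : ∀ᶠ n in atTop, (K n : ℝ) ≤ f n * r n ^ β + 1 := by
    filter_upwards [hf2, hr1] with n h1 h2
    have : (0:ℝ) ≤ f n * r n ^ β := by positivity
    exact (Nat.ceil_lt_add_one this).le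
  -- K / f tends to infinity
  have hKF : Tendsto (fun n => (K n:ℝ)/f n) atTop atTop := by
    apply tendsto_atTop_mono' atTop ?_ ((tendsto_rpow_atTop hβpos).comp hr)
    filter_upwards [hf2] with n h1
    have hfn : 0 < f n := by linarith
    rw [Function.comp_apply, le_div_iff₀ hfn, mul_comm]
    exact hKlb n
  -- K / (n-1) tends to zero
  have hn1 : Tendsto (fun n : ℕ => (n:ℝ) - 1) atTop atTop :=
    tendsto_atTop_add_const_right _ (-1) tendsto_natCast_atTop_atTop
  have hKM : Tendsto (fun n => (K n:ℝ)/((n:ℝ)-1)) atTop (nhds 0) := by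
    apply squeeze_zero' (g := fun n : ℕ => r n ^ (β - 1) + ((n:ℝ)-1)⁻¹)
    · filter_upwards [eventually_ge_atTop 2] with n hn
      have h0 : (0:ℝ) < (n:ℝ) - 1 := by
        have : (2:ℝ) ≤ (n:ℝ) := by exact_mod_cast hn
        linarith
      positivity
    · filter_upwards [hf2, hr1, eventually_ge_atTop 2, hKub] with n h1 h2 hn hub
      have hfn : 0 < f n := by linarith
      have hn0 : (0:ℝ) < (n:ℝ) - 1 := by
        have : (2:ℝ) ≤ (n:ℝ) := by exact_mod_cast hn
        linarith
      have hrn : 0 < r n := by linarith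
      have e1 : f n * r n ^ β / ((n:ℝ)-1) = r n ^ (β - 1) := by
        rw [Real.rpow_sub hrn, Real.rpow_one]
        rw [show r n = ((n:ℝ)-1)/f n from rfl]
        field_simp
      calc (K n:ℝ)/((n:ℝ)-1) ≤ (f n * r n ^ β + 1)/((n:ℝ)-1) :=
            (div_le_div_iff_of_pos_right hn0).mpr hub
        _ = r n ^ (β-1) + ((n:ℝ)-1)⁻¹ := by rw [add_div, e1, one_div]
    · have l1 : Tendsto (fun n => r n ^ (β-1)) atTop (nhds 0) := by
        apply ((tendsto_rpow_neg_atTop (by linarith : 0 < 1 - β)).comp hr).congr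
        intro n
        rw [Function.comp_apply]
        norm_num
      have l2 : Tendsto (fun n : ℕ => ((n:ℝ)-1)⁻¹) atTop (nhds 0) :=
        tendsto_inv_atTop_zero.comp hn1
      simpa using l1.add l2
  -- J/f tends to 1
  have hJF : Tendsto (fun n => (J n:ℝ)/f n) atTop (nhds 1) := by
    apply tendsto_of_tendsto_of_tendsto_of_le_of_le' tendsto_const_nhds
      (g := fun _ => (1:ℝ)) (h := fun n => 1 + 1/f n)
    · have : Tendsto (fun n => 1/f n) atTop (nhds 0) := by
        simp only [one_div]; exact hf.inv_tendsto_atTop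
      simpa using (tendsto_const_nhds (x := (1:ℝ))).add this
    · filter_upwards [hf2] with n h1
      have hfn : 0 < f n := by linarith
      rw [le_div_iff₀ hfn, one_mul]
      exact Nat.le_ceil _
    · filter_upwards [hf2] with n h1
      have hfn : 0 < f n := by linarith
      rw [div_le_iff₀ hfn]
      have := (Nat.ceil_lt_add_one (by linarith : (0:ℝ) ≤ f n)).le
      calc (J n:ℝ) ≤ f n + 1 := this
        _ ≤ (1 + 1/f n) * f n := by field_simp; norm_num
  -- (J-1)/f tends to 1
  have hJ1F : Tendsto (fun n => ((J n:ℝ) - 1)/f n) atTop (nhds 1) := by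
    apply tendsto_of_tendsto_of_tendsto_of_le_of_le'
      (g := fun n => 1 - 1/f n) (h := fun _ => (1:ℝ))
    · have : Tendsto (fun n => 1/f n) atTop (nhds 0) := by
        simp only [one_div]; exact hf.inv_tendsto_atTop
      simpa using (tendsto_const_nhds (x := (1:ℝ))).sub this
    · exact tendsto_const_nhds
    · filter_upwards [hf2] with n h1
      have hfn : 0 < f n := by linarith
      have h2 : f n ≤ (J n:ℝ) := Nat.le_ceil _
      rw [show (1:ℝ) - 1/f n = (f n - 1)/f n by field_simp]
      exact (div_le_div_iff_of_pos_right hfn).mpr (by linarith)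
    · filter_upwards [hf2] with n h1
      have hfn : 0 < f n := by linarith
      rw [div_le_one hfn]
      have := (Nat.ceil_lt_add_one (by linarith : (0:ℝ) ≤ f n)).le
      calc (J n:ℝ) - 1 ≤ f n + 1 - 1 := by linarith [this]
        _ = f n := by ring
  -- continuity helper
  have hcont1 : ∀ {g : ℕ → ℝ} (c : ℝ), Tendsto g atTop (nhds 1) →
      Tendsto (fun n => g n ^ c) atTop (nhds 1) := by
    intro g c hg
    have := (Real.continuousAt_rpow_const 1 c (Or.inl one_ne_zero)).tendsto.comp hg
    simpa [Real.one_rpow, Function.comp_def] using this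
  -- (n-1)/n tends to 1
  have hMn : Tendsto (fun n : ℕ => ((n:ℝ)-1)/(n:ℝ)) atTop (nhds 1) := by
    have he : ∀ᶠ n : ℕ in atTop, 1 - 1/(n:ℝ) = ((n:ℝ)-1)/(n:ℝ) := by
      filter_upwards [eventually_ge_atTop 1] with n hn
      have : (n:ℝ) ≠ 0 := by
        have : (1:ℝ) ≤ (n:ℝ) := by exact_mod_cast hn
        linarith
      field_simp
    apply Tendsto.congr' he
    simpa using (tendsto_const_nhds (x := (1:ℝ))).sub tendsto_one_div_atTop_nhds_zero_nat
  -- ((n-1) - K)/n tends to 1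
  have hMKn : Tendsto (fun n : ℕ => (((n:ℝ)-1) - (K n:ℝ))/(n:ℝ)) atTop (nhds 1) := by
    have base := ((tendsto_const_nhds (x := (1:ℝ))).sub hKM).mul hMn
    have he : ∀ᶠ n : ℕ in atTop,
        (1 - (K n:ℝ)/((n:ℝ)-1)) * (((n:ℝ)-1)/(n:ℝ)) = (((n:ℝ)-1) - (K n:ℝ))/(n:ℝ) := by
      filter_upwards [eventually_ge_atTop 2] with n hn
      have h2 : (2:ℝ) ≤ (n:ℝ) := by exact_mod_cast hn
      have hn0 : (n:ℝ) ≠ 0 := by linarith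
      have hn10 : (n:ℝ) - 1 ≠ 0 := by linarith
      field_simp
    apply Tendsto.congr' he
    simpa using base
  -- main lower comparison function tends to 1
  have glow_lim : Tendsto (fun n =>
      (((J n:ℝ)/f n)^(2-α) - ((K n:ℝ)/f n)^(2-α)) * (((n:ℝ)-1)/(n:ℝ))^(1-α))
      atTop (nhds 1) := by
    have t1 := hcont1 (2-α) hJF
    have t2 : Tendsto (fun n => ((K n:ℝ)/f n)^(2-α)) atTop (nhds 0) := by
      apply ((tendsto_rpow_neg_atTop hα2).comp hKF).congr
      intro n
      rw [Function.comp_apply]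
      norm_num
    have t3 := hcont1 (1-α) hMn
    have := (t1.sub t2).mul t3
    simpa using this
  -- main upper comparison function tends to 1
  have ghigh_lim : Tendsto (fun n =>
      (((J n:ℝ)-1)/f n)^(2-α) * ((((n:ℝ)-1) - (K n:ℝ))/(n:ℝ))^(1-α)
        + ((α-2)/2 * (2:ℝ)^α) * r n ^ ((2-α)/2)) atTop (nhds 1) := by
    have t1 := (hcont1 (2-α) hJ1F).mul (hcont1 (1-α) hMKn)
    have t2 : Tendsto (fun n => ((α-2)/2 * (2:ℝ)^α) * r n ^ ((2-α)/2)) atTop (nhds 0) := by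
      have h0 : Tendsto (fun n => r n ^ ((2-α)/2)) atTop (nhds 0) := by
        apply ((tendsto_rpow_neg_atTop (by linarith : 0 < (α-2)/2)).comp hr).congr
        intro n
        rw [Function.comp_apply]
        norm_num
        ring_nf
      simpa using h0.const_mul ((α-2)/2 * (2:ℝ)^α)
    have := t1.add t2
    simpa using this
  -- eventual inequalities on natural numbers
  have hevJ2 : ∀ᶠ n in atTop, 2 ≤ J n := by
    filter_upwards [hf2] with n h1
    have : (2:ℝ) ≤ (J n:ℝ) := le_trans h1 (Nat.le_ceil _)
    exact_mod_cast this
  have hevJK : ∀ᶠ n in atTop, J n ≤ K n := by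
    filter_upwards [hf2, hKF.eventually_ge_atTop 2] with n h1 h2
    have hfn : 0 < f n := by linarith
    have hK2 : 2 * f n ≤ (K n:ℝ) := by
      rw [le_div_iff₀ hfn] at h2
      linarith
    have hJ1 : (J n:ℝ) < f n + 1 := Nat.ceil_lt_add_one (by linarith)
    have : (J n:ℝ) ≤ (K n:ℝ) := by linarith
    exact_mod_cast this
  have hevKM : ∀ᶠ n in atTop, 2 * K n ≤ n - 1 := by
    have hev := hKM.eventually (eventually_lt_nhds (by norm_num : (0:ℝ) < 1/2))
    filter_upwards [hev, eventually_ge_atTop 2] with n h1 hn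
    have h2 : (2:ℝ) ≤ (n:ℝ) := by exact_mod_cast hn
    have hn0 : (0:ℝ) < (n:ℝ) - 1 := by linarith
    rw [div_lt_iff₀ hn0] at h1
    have : (2 * K n : ℝ) ≤ ((n:ℝ) - 1) := by push_cast; linarith
    have hcast : ((n:ℝ) - 1) = ((n - 1 : ℕ):ℝ) := by
      rw [Nat.cast_sub (by omega)]
      norm_num
    rw [hcast] at this
    exact_mod_cast this
  -- positivity of the denominator
  have hevD : ∀ᶠ n in atTop, 0 < 2/(α-2) * f n^(2-α) * (n:ℝ)^(1-α) := by
    filter_upwards [hf2, eventually_ge_atTop 1] with n h1 hn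
    have hfn : (0:ℝ) < f n := by linarith
    have hn0 : (0:ℝ) < (n:ℝ) := by exact_mod_cast hn
    have e1 := Real.rpow_pos_of_pos hfn (2-α)
    have e2 := Real.rpow_pos_of_pos hn0 (1-α)
    positivity
  apply tendsto_of_tendsto_of_tendsto_of_le_of_le' glow_lim ghigh_lim
  · -- lower bound
    filter_upwards [hf2, hevJ2, hevJK, hevKM, eventually_ge_atTop 4, hr1, hevD] with
      n h1 hJ2' hJK' hKM' hn4 hr1n hD
    have hfn : (0:ℝ) < f n := by linarith
    have hn0 : (0:ℝ) < (n:ℝ) := by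
      have : (4:ℝ) ≤ (n:ℝ) := by exact_mod_cast hn4
      linarith
    rw [sum_eq_aux α (f n) n (by linarith) (by omega)]
    rw [le_div_iff₀ hD]
    have hsand := (sandwich α hα (n-1) (J n) (K n) hJ2' hJK' hKM').1
    have hcast : ((n - 1:ℕ):ℝ) = (n:ℝ) - 1 := by
      rw [Nat.cast_sub (by omega)]; norm_num
    rw [hcast] at hsand
    have hF0 : f n ^ (2-α) ≠ 0 := ne_of_gt (Real.rpow_pos_of_pos hfn _)
    have hn0' : (n:ℝ) ^ (1-α) ≠ 0 := ne_of_gt (Real.rpow_pos_of_pos hn0 _)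
    have heq : (((J n:ℝ)/f n)^(2-α) - ((K n:ℝ)/f n)^(2-α)) * (((n:ℝ)-1)/(n:ℝ))^(1-α)
          * (2/(α-2) * f n^(2-α) * (n:ℝ)^(1-α))
        = 2 * (((J n:ℝ)^(2-α) - (K n:ℝ)^(2-α)) / (α-2)) * ((n:ℝ)-1)^(1-α) := by
      rw [Real.div_rpow (Nat.cast_nonneg _) hfn.le,
        Real.div_rpow (Nat.cast_nonneg _) hfn.le,
        Real.div_rpow (by linarith : (0:ℝ) ≤ (n:ℝ)-1) hn0.le]
      field_simp
    calc (((J n:ℝ)/f n)^(2-α) - ((K n:ℝ)/f n)^(2-α)) * (((n:ℝ)-1)/(n:ℝ))^(1-α)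
          * (2/(α-2) * f n^(2-α) * (n:ℝ)^(1-α))
        = 2 * (((J n:ℝ)^(2-α) - (K n:ℝ)^(2-α)) / (α-2)) * ((n:ℝ)-1)^(1-α) := heq
      _ ≤ _ := hsand
  · -- upper bound
    filter_upwards [hf2, hevJ2, hevJK, hevKM, eventually_ge_atTop 4, hr1, hevD] with
      n h1 hJ2' hJK' hKM' hn4 hr1n hD
    have hfn : (0:ℝ) < f n := by linarith
    have hn4' : (4:ℝ) ≤ (n:ℝ) := by exact_mod_cast hn4
    have hn0 : (0:ℝ) < (n:ℝ) := by linarith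
    rw [sum_eq_aux α (f n) n (by linarith) (by omega)]
    rw [div_le_iff₀ hD]
    have hsand := (sandwich α hα (n-1) (J n) (K n) hJ2' hJK' hKM').2
    have hcast : ((n - 1:ℕ):ℝ) = (n:ℝ) - 1 := by
      rw [Nat.cast_sub (by omega)]; norm_num
    have hcast2 : ((n - 1 - K n:ℕ):ℝ) = ((n:ℝ) - 1) - (K n:ℝ) := by
      rw [Nat.cast_sub (by omega), Nat.cast_sub (by omega)]; norm_num
    rw [hcast, hcast2] at hsand
    refine hsand.trans ?_
    have hrpos' : (0:ℝ) < r n := lt_of_lt_of_le one_pos hr1n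
    have hx : (0:ℝ) < f n * r n ^ β := by positivity
    have hKpos : (0:ℝ) < (K n:ℝ) := lt_of_lt_of_le hx (hKlb n)
    have hF0 : f n ^ (2-α) ≠ 0 := ne_of_gt (Real.rpow_pos_of_pos hfn _)
    have hn0' : (n:ℝ) ^ (1-α) ≠ 0 := ne_of_gt (Real.rpow_pos_of_pos hn0 _)
    have hJ1nonneg : (0:ℝ) ≤ (J n:ℝ) - 1 := by
      have : (2:ℝ) ≤ (J n:ℝ) := by exact_mod_cast hJ2'
      linarith
    have hKn1 : (K n:ℝ) ≤ (n:ℝ) - 1 := by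
      have h2' : (2 * K n : ℕ) ≤ n - 1 := hKM'
      have : ((2 * K n : ℕ):ℝ) ≤ ((n-1:ℕ):ℝ) := by exact_mod_cast h2'
      rw [hcast] at this
      push_cast at this
      linarith [hKpos]
    -- first summand equality
    have eqA : 2 * (((J n:ℝ)-1)^(2-α)/(α-2)) * (((n:ℝ)-1) - (K n:ℝ))^(1-α)
        = (((J n:ℝ)-1)/f n)^(2-α) * ((((n:ℝ)-1) - (K n:ℝ))/(n:ℝ))^(1-α)
          * (2/(α-2) * f n^(2-α) * (n:ℝ)^(1-α)) := by
      rw [Real.div_rpow hJ1nonneg hfn.le,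
        Real.div_rpow (by linarith : (0:ℝ) ≤ ((n:ℝ)-1) - (K n:ℝ)) hn0.le]
      field_simp
    -- second summand estimate
    have c1 : (K n:ℝ)^(1-α) ≤ f n^(1-α) * r n^(β*(1-α)) := by
      have e : (f n * r n ^ β)^(1-α) = f n^(1-α) * r n^(β*(1-α)) := by
        rw [Real.mul_rpow hfn.le (Real.rpow_nonneg hrpos'.le β),
          ← Real.rpow_mul hrpos'.le]
      rw [← e]
      exact Real.rpow_le_rpow_of_nonpos hx (hKlb n) (by linarith)
    have hK1a_pos : (0:ℝ) < (K n:ℝ)^(1-α) := Real.rpow_pos_of_pos hKpos _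
    have hfr_pos : (0:ℝ) < f n^(1-α) * r n^(β*(1-α)) := by positivity
    have c2 : (K n:ℝ)^(1-α) * (K n:ℝ)^(1-α)
        ≤ (f n^(1-α) * r n^(β*(1-α))) * (f n^(1-α) * r n^(β*(1-α))) :=
      mul_le_mul c1 c1 hK1a_pos.le hfr_pos.le
    have key : (n:ℝ)^α * f n^(-α) * r n^(2*β*(1-α)) ≤ 2^α * r n^((2-α)/2) := by
      have h2r : (n:ℝ)/f n ≤ 2 * r n := by
        have e : 2 * r n = (2*((n:ℝ)-1))/f n := by
          rw [show r n = ((n:ℝ)-1)/f n from rfl]; ring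
        rw [e]
        exact (div_le_div_iff_of_pos_right hfn).mpr (by linarith)
      have hnF : (0:ℝ) ≤ (n:ℝ)/f n := by positivity
      have p1 : ((n:ℝ)/f n)^α ≤ (2*r n)^α := Real.rpow_le_rpow hnF h2r (by linarith)
      have p2 : ((2:ℝ)*r n)^α = 2^α * r n^α := Real.mul_rpow (by norm_num) hrpos'.le
      have p3 : ((n:ℝ)/f n)^α = (n:ℝ)^α * f n^(-α) := by
        rw [Real.div_rpow (Nat.cast_nonneg n) hfn.le, Real.rpow_neg hfn.le, div_eq_mul_inv]
      calc (n:ℝ)^α * f n^(-α) * r n^(2*β*(1-α))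
          = ((n:ℝ)/f n)^α * r n^(2*β*(1-α)) := by rw [p3]
        _ ≤ ((2:ℝ)*r n)^α * r n^(2*β*(1-α)) :=
            mul_le_mul_of_nonneg_right p1 (Real.rpow_nonneg hrpos'.le _)
        _ = 2^α * (r n^α * r n^(2*β*(1-α))) := by rw [p2]; ring
        _ = 2^α * r n^(α + 2*β*(1-α)) := by rw [Real.rpow_add hrpos']
        _ = 2^α * r n^((2-α)/2) := by rw [hexp]
    have ef : f n^(1-α) * f n^(1-α) = f n^(-α) * f n^(2-α) := by
      rw [← Real.rpow_add hfn, ← Real.rpow_add hfn]; ring_nf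
    have er : r n^(β*(1-α)) * r n^(β*(1-α)) = r n^(2*β*(1-α)) := by
      rw [← Real.rpow_add hrpos']; ring_nf
    have en : (n:ℝ)^α * (n:ℝ)^(1-α) = (n:ℝ) := by
      rw [← Real.rpow_add hn0, show α + (1-α) = 1 by ring, Real.rpow_one]
    have e2 : (n:ℝ) * ((f n^(1-α) * r n^(β*(1-α))) * (f n^(1-α) * r n^(β*(1-α))))
        = ((n:ℝ)^α * f n^(-α) * r n^(2*β*(1-α))) * (f n^(2-α) * (n:ℝ)^(1-α)) := by
      calc (n:ℝ) * ((f n^(1-α) * r n^(β*(1-α))) * (f n^(1-α) * r n^(β*(1-α))))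
          = (n:ℝ) * (f n^(1-α) * f n^(1-α)) * (r n^(β*(1-α)) * r n^(β*(1-α))) := by ring
        _ = (n:ℝ) * (f n^(-α) * f n^(2-α)) * r n^(2*β*(1-α)) := by rw [ef, er]
        _ = ((n:ℝ)^α * (n:ℝ)^(1-α)) * (f n^(-α) * f n^(2-α)) * r n^(2*β*(1-α)) := by
            rw [en]
        _ = _ := by ring
    have keyB : ((n:ℝ)-1) * ((K n:ℝ)^(1-α) * (K n:ℝ)^(1-α))
        ≤ ((α-2)/2 * (2:ℝ)^α) * r n ^ ((2-α)/2) * (2/(α-2) * f n^(2-α) * (n:ℝ)^(1-α)) := by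
      have e3 : ((α-2)/2 * (2:ℝ)^α) * r n ^ ((2-α)/2) * (2/(α-2) * f n^(2-α) * (n:ℝ)^(1-α))
          = (2^α * r n^((2-α)/2)) * (f n^(2-α) * (n:ℝ)^(1-α)) := by
        field_simp
      rw [e3]
      calc ((n:ℝ)-1) * ((K n:ℝ)^(1-α) * (K n:ℝ)^(1-α))
          ≤ (n:ℝ) * ((f n^(1-α) * r n^(β*(1-α))) * (f n^(1-α) * r n^(β*(1-α)))) := by
            apply mul_le_mul (by linarith) c2 (by positivity) hn0.le
        _ = ((n:ℝ)^α * f n^(-α) * r n^(2*β*(1-α))) * (f n^(2-α) * (n:ℝ)^(1-α)) := e2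
        _ ≤ (2^α * r n^((2-α)/2)) * (f n^(2-α) * (n:ℝ)^(1-α)) := by
            apply mul_le_mul_of_nonneg_right key
            positivity
    calc 2 * (((J n:ℝ)-1)^(2-α)/(α-2)) * (((n:ℝ)-1) - (K n:ℝ))^(1-α)
          + ((n:ℝ)-1) * ((K n:ℝ)^(1-α) * (K n:ℝ)^(1-α))
        ≤ (((J n:ℝ)-1)/f n)^(2-α) * ((((n:ℝ)-1) - (K n:ℝ))/(n:ℝ))^(1-α)
            * (2/(α-2) * f n^(2-α) * (n:ℝ)^(1-α))
          + ((α-2)/2 * (2:ℝ)^α) * r n ^ ((2-α)/2)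
            * (2/(α-2) * f n^(2-α) * (n:ℝ)^(1-α)) := by
          exact add_le_add (le_of_eq eqA) keyB
      _ = _ := by ring
end

section
/- Let α > 3 be a real constant and let f : ℕ → ℝ satisfy f(n) → ∞ and f(n) = o(n^{1/(α−2)}) as n → ∞. Then, as n → ∞, Σ_{(j,k,l) ∈ ℤ_{≥1}³, j+k+l = n−2, j ≥ f(n), k ≥ f(n), l > n/2} j^{1−α}·k^{1−α}·l^{2−α} = (1+o(1))·(1/(α−2)²)·f(n)^{4−2α}·n^{2−α}. -/
open Filter Finset

theorem integral_pow_aux (α c d : ℝ) (hα : 3 < α) (hc : 0 < c) (hcd : c ≤ d) :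
    ∫ x in c..d, x ^ (1 - α) = (c ^ (2 - α) - d ^ (2 - α)) / (α - 2) := by
  rw [integral_rpow (Or.inr ⟨by intro h; rw [sub_eq_iff_eq_add] at h; linarith,
      by rw [Set.uIcc_of_le hcd]; intro h; exact absurd h.1 (not_le.mpr hc)⟩)]
  have h1 : 1 - α + 1 = 2 - α := by ring
  rw [h1, div_eq_div_iff (by linarith) (by linarith)]
  ring

theorem anti_aux (α : ℝ) (hα : 3 < α) {c d : ℝ} (hc : 0 < c) :
    AntitoneOn (fun x : ℝ => x ^ (1 - α)) (Set.Icc c d) := by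
  intro x hx y hy hxy
  exact Real.rpow_le_rpow_of_nonpos (lt_of_lt_of_le hc hx.1) hxy (by linarith)

/-- tail upper bound -/
theorem sum_pow_le (α : ℝ) (hα : 3 < α) (a m : ℕ) (ha : 2 ≤ a) :
    ∑ j ∈ Finset.Icc a m, (j : ℝ) ^ (1 - α) ≤ ((a : ℝ) - 1) ^ (2 - α) / (α - 2) := by
  have ha1 : (1:ℝ) ≤ (a:ℝ) - 1 := by
    have : (2:ℝ) ≤ (a:ℝ) := by exact_mod_cast ha
    linarith
  rcases le_or_gt a m with h | h
  · have hab : a - 1 ≤ m := le_trans (Nat.sub_le a 1) h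
    have hcast : ((a - 1 : ℕ) : ℝ) = (a : ℝ) - 1 := by
      have : (1:ℕ) ≤ a := by omega
      push_cast [this]; ring
    have key := AntitoneOn.sum_le_integral_Ico hab
      (f := fun x : ℝ => x ^ (1 - α)) (anti_aux α hα (by rw [hcast]; linarith))
    have hre : ∑ i ∈ Finset.Ico (a-1) m, ((i + 1 : ℕ) : ℝ) ^ (1 - α)
        = ∑ j ∈ Finset.Icc a m, (j : ℝ) ^ (1 - α) := by
      rw [← Finset.Ico_add_one_right_eq_Icc]
      rw [Finset.sum_Ico_eq_sum_range, Finset.sum_Ico_eq_sum_range]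
      have h1 : m + 1 - a = m - (a - 1) := by omega
      rw [h1]
      apply Finset.sum_congr rfl
      intro i _
      congr 2
      omega
    rw [hre] at key
    refine le_trans key ?_
    have hc0 : (0:ℝ) < ((a-1:ℕ):ℝ) := by rw [hcast]; linarith
    have hcd : ((a-1:ℕ):ℝ) ≤ (m:ℝ) := Nat.cast_le.mpr hab
    rw [integral_pow_aux α _ _ hα hc0 hcd, hcast]
    rw [div_le_div_iff_of_pos_right (by linarith)]
    have := Real.rpow_nonneg (Nat.cast_nonneg m) (2 - α)
    linarith
  · rw [Finset.Icc_eq_empty (by omega)]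
    simp only [Finset.sum_empty]
    apply div_nonneg (Real.rpow_nonneg (by linarith) _) (by linarith)

/-- lower bound -/
theorem sum_pow_ge (α : ℝ) (hα : 3 < α) (a b : ℕ) (ha : 1 ≤ a) :
    ((a : ℝ) ^ (2 - α) - ((b : ℝ) + 1) ^ (2 - α)) / (α - 2)
      ≤ ∑ j ∈ Finset.Icc a b, (j : ℝ) ^ (1 - α) := by
  have hapos : (0:ℝ) < (a:ℝ) := by exact_mod_cast ha
  rcases le_or_gt a b with h | h
  · have hab : a ≤ b + 1 := by omega
    have key := AntitoneOn.integral_le_sum_Ico hab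
      (f := fun x : ℝ => x ^ (1 - α)) (anti_aux α hα (by positivity))
    rw [Finset.Ico_add_one_right_eq_Icc] at key
    have hcd : ((a:ℕ):ℝ) ≤ ((b+1:ℕ):ℝ) := Nat.cast_le.mpr hab
    rw [integral_pow_aux α _ _ hα hapos hcd] at key
    refine le_trans (le_of_eq ?_) key
    push_cast
    ring
  · rw [Finset.Icc_eq_empty (by omega)]
    simp only [Finset.sum_empty]
    apply div_nonpos_of_nonpos_of_nonneg ?_ (by linarith)
    have : ((b:ℝ) + 1) ≤ (a:ℝ) := by exact_mod_cast h
    have := Real.rpow_le_rpow_of_nonpos (by positivity) this (by linarith : 2 - α ≤ 0)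
    linarith

/-- bound a sum over triples with fixed total by a product of sums over the two projections -/
theorem proj_bound (n : ℕ) (T' : Finset (ℕ × ℕ × ℕ))
    (hsum : ∀ t ∈ T', t.1 + t.2.1 + t.2.2 = n - 2)
    (s₁ s₂ : Finset ℕ) (h1 : ∀ t ∈ T', t.1 ∈ s₁) (h2 : ∀ t ∈ T', t.2.1 ∈ s₂)
    (u v : ℕ → ℝ) (hu : ∀ i, 0 ≤ u i) (hv : ∀ i, 0 ≤ v i) :
    ∑ t ∈ T', u t.1 * v t.2.1 ≤ (∑ i ∈ s₁, u i) * (∑ j ∈ s₂, v j) := by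
  have hinj : ∀ t ∈ T', ∀ t' ∈ T', (t.1, t.2.1) = (t'.1, t'.2.1) → t = t' := by
    intro t ht t' ht' h
    have h1' := hsum t ht
    have h2' := hsum t' ht'
    rw [Prod.mk.injEq] at h
    have : t.2.2 = t'.2.2 := by omega
    exact Prod.ext h.1 (Prod.ext h.2 this)
  have himg : ∑ t ∈ T', u t.1 * v t.2.1
      = ∑ p ∈ T'.image (fun t => (t.1, t.2.1)), u p.1 * v p.2 :=
    (Finset.sum_image (g := fun t : ℕ × ℕ × ℕ => (t.1, t.2.1)) (f := fun p : ℕ × ℕ => u p.1 * v p.2) hinj).symm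
  rw [himg, Finset.sum_mul_sum]
  rw [← Finset.sum_product']
  apply Finset.sum_le_sum_of_subset_of_nonneg
  · intro p hp
    rw [Finset.mem_image] at hp
    obtain ⟨t, ht, rfl⟩ := hp
    exact Finset.mem_product.mpr ⟨h1 t ht, h2 t ht⟩
  · intro p _ _
    exact mul_nonneg (hu _) (hv _)

theorem lower_bound (α : ℝ) (hα : 3 < α) (f : ℕ → ℝ) (n : ℕ) (A B : ℕ)
    (hfA : f n ≤ (A : ℝ)) (hA2 : 2 ≤ A) (hAB : A ≤ B) (hB : (B : ℝ) ≤ (n : ℝ) / 8)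
    (hn : 64 ≤ n) :
    (n : ℝ) ^ (2 - α) * (∑ j ∈ Finset.Icc A B, (j : ℝ) ^ (1 - α)) ^ 2 ≤
      ∑ t ∈ (Finset.range n ×ˢ Finset.range n ×ˢ Finset.range n).filter
          (fun t => t.1 + t.2.1 + t.2.2 = n - 2 ∧ 1 ≤ t.1 ∧ 1 ≤ t.2.1 ∧ 1 ≤ t.2.2 ∧
            f n ≤ (t.1 : ℝ) ∧ f n ≤ (t.2.1 : ℝ) ∧ (n : ℝ) / 2 < (t.2.2 : ℝ)),
        (t.1 : ℝ) ^ (1 - α) * (t.2.1 : ℝ) ^ (1 - α) * (t.2.2 : ℝ) ^ (2 - α) := by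
  have hnR : (64 : ℝ) ≤ (n : ℝ) := by exact_mod_cast hn
  set w : ℕ × ℕ × ℕ → ℝ :=
    fun t => (t.1 : ℝ) ^ (1 - α) * (t.2.1 : ℝ) ^ (1 - α) * (t.2.2 : ℝ) ^ (2 - α) with hw
  have hwnn : ∀ t : ℕ × ℕ × ℕ, 0 ≤ w t := by
    intro t
    exact mul_nonneg (mul_nonneg (Real.rpow_nonneg (Nat.cast_nonneg _) _)
      (Real.rpow_nonneg (Nat.cast_nonneg _) _)) (Real.rpow_nonneg (Nat.cast_nonneg _) _)
  set G : Finset (ℕ × ℕ) := Finset.Icc A B ×ˢ Finset.Icc A B with hG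
  set φ : ℕ × ℕ → ℕ × ℕ × ℕ := fun p => (p.1, p.2, n - 2 - p.1 - p.2) with hφ
  -- basic bounds on members of G
  have hGb : ∀ p ∈ G, A ≤ p.1 ∧ p.1 ≤ B ∧ A ≤ p.2 ∧ p.2 ≤ B := by
    intro p hp
    rw [hG, Finset.mem_product, Finset.mem_Icc, Finset.mem_Icc] at hp
    exact ⟨hp.1.1, hp.1.2, hp.2.1, hp.2.2⟩
  have hBn : B + B + 8 ≤ n := by
    have : (B : ℝ) + (B : ℝ) + 8 ≤ (n : ℝ) := by linarith
    exact_mod_cast this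
  -- membership of φ p in the filtered set
  have hmem : ∀ p ∈ G, φ p ∈ (Finset.range n ×ˢ Finset.range n ×ˢ Finset.range n).filter
      (fun t => t.1 + t.2.1 + t.2.2 = n - 2 ∧ 1 ≤ t.1 ∧ 1 ≤ t.2.1 ∧ 1 ≤ t.2.2 ∧
        f n ≤ (t.1 : ℝ) ∧ f n ≤ (t.2.1 : ℝ) ∧ (n : ℝ) / 2 < (t.2.2 : ℝ)) := by
    intro p hp
    obtain ⟨h1, h2, h3, h4⟩ := hGb p hp
    have hl : (((n - 2 - p.1 - p.2 : ℕ)) : ℝ) = (n : ℝ) - 2 - (p.1 : ℝ) - (p.2 : ℝ) := by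
      have h5 : (n - 2 - p.1 - p.2) + (p.1 + p.2 + 2) = n := by omega
      have := congrArg (fun k : ℕ => (k : ℝ)) h5
      push_cast at this
      linarith
    have hp1 : (p.1 : ℝ) ≤ (n : ℝ) / 8 := le_trans (by exact_mod_cast h2) hB
    have hp2 : (p.2 : ℝ) ≤ (n : ℝ) / 8 := le_trans (by exact_mod_cast h4) hB
    rw [Finset.mem_filter]
    constructor
    · rw [Finset.mem_product]
      constructor
      · rw [Finset.mem_range]; show p.1 < n; omega
      rw [Finset.mem_product]
      constructor
      · rw [Finset.mem_range]; show p.2 < n; omega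
      · rw [Finset.mem_range]; show n - 2 - p.1 - p.2 < n; omega
    refine ⟨by show p.1 + p.2 + (n - 2 - p.1 - p.2) = n - 2; omega,
      by show 1 ≤ p.1; omega, by show 1 ≤ p.2; omega,
      by show 1 ≤ n - 2 - p.1 - p.2; omega,
      le_trans hfA (by exact_mod_cast h1),
      le_trans hfA (by exact_mod_cast h3), ?_⟩
    show (n : ℝ) / 2 < ((n - 2 - p.1 - p.2 : ℕ) : ℝ)
    rw [hl]; linarith
  have hinj : ∀ p ∈ G, ∀ q ∈ G, φ p = φ q → p = q := by
    intro p _ q _ h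
    rw [hφ, Prod.mk.injEq, Prod.mk.injEq] at h
    exact Prod.ext h.1 h.2.1
  calc (n : ℝ) ^ (2 - α) * (∑ j ∈ Finset.Icc A B, (j : ℝ) ^ (1 - α)) ^ 2
      ≤ ∑ p ∈ G, w (φ p) := by
        have key : ∀ p ∈ G, (p.1 : ℝ) ^ (1 - α) * (p.2 : ℝ) ^ (1 - α) * (n : ℝ) ^ (2 - α)
            ≤ w (φ p) := by
          intro p hp
          obtain ⟨h1, h2, h3, h4⟩ := hGb p hp
          have hl : (((n - 2 - p.1 - p.2 : ℕ)) : ℝ) = (n : ℝ) - 2 - (p.1 : ℝ) - (p.2 : ℝ) := by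
            have h5 : (n - 2 - p.1 - p.2) + (p.1 + p.2 + 2) = n := by omega
            have := congrArg (fun k : ℕ => (k : ℝ)) h5
            push_cast at this
            linarith
          have hlpos : (0 : ℝ) < ((n - 2 - p.1 - p.2 : ℕ) : ℝ) := by
            have : 1 ≤ n - 2 - p.1 - p.2 := by omega
            exact_mod_cast Nat.lt_of_lt_of_le Nat.zero_lt_one this
          have hln : ((n - 2 - p.1 - p.2 : ℕ) : ℝ) ≤ (n : ℝ) := by
            rw [hl]
            have : (0:ℝ) ≤ (p.1 : ℝ) := Nat.cast_nonneg _
            have : (0:ℝ) ≤ (p.2 : ℝ) := Nat.cast_nonneg _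
            linarith
          have hrr : (n : ℝ) ^ (2 - α) ≤ ((n - 2 - p.1 - p.2 : ℕ) : ℝ) ^ (2 - α) :=
            Real.rpow_le_rpow_of_nonpos hlpos hln (by linarith)
          show _ ≤ (p.1 : ℝ) ^ (1 - α) * (p.2 : ℝ) ^ (1 - α) * _
          apply mul_le_mul_of_nonneg_left hrr
          exact mul_nonneg (Real.rpow_nonneg (Nat.cast_nonneg _) _)
            (Real.rpow_nonneg (Nat.cast_nonneg _) _)
        calc (n : ℝ) ^ (2 - α) * (∑ j ∈ Finset.Icc A B, (j : ℝ) ^ (1 - α)) ^ 2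
            = ∑ p ∈ G, (p.1 : ℝ) ^ (1 - α) * (p.2 : ℝ) ^ (1 - α) * (n : ℝ) ^ (2 - α) := by
              rw [hG, Finset.sum_product]
              rw [sq, Finset.sum_mul_sum]
              rw [Finset.mul_sum]
              apply Finset.sum_congr rfl
              intro i _
              rw [Finset.mul_sum]
              apply Finset.sum_congr rfl
              intro j _
              ring
          _ ≤ ∑ p ∈ G, w (φ p) := Finset.sum_le_sum key
    _ = ∑ t ∈ G.image φ, w t := (Finset.sum_image hinj).symm
    _ ≤ _ := by
        apply Finset.sum_le_sum_of_subset_of_nonneg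
        · intro t ht
          rw [Finset.mem_image] at ht
          obtain ⟨p, hp, rfl⟩ := ht
          exact hmem p hp
        · intro t _ _
          exact hwnn t

theorem upper_bound (α : ℝ) (hα : 3 < α) (f : ℕ → ℝ) (n A B : ℕ)
    (hceil : ∀ j : ℕ, f n ≤ (j : ℝ) → A ≤ j)
    (hB : (B : ℝ) ≤ (n : ℝ) / 8) (hn : 64 ≤ n) :
    ∑ t ∈ (Finset.range n ×ˢ Finset.range n ×ˢ Finset.range n).filter
        (fun t => t.1 + t.2.1 + t.2.2 = n - 2 ∧ 1 ≤ t.1 ∧ 1 ≤ t.2.1 ∧ 1 ≤ t.2.2 ∧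
          f n ≤ (t.1 : ℝ) ∧ f n ≤ (t.2.1 : ℝ) ∧ (n : ℝ) / 2 < (t.2.2 : ℝ)),
      (t.1 : ℝ) ^ (1 - α) * (t.2.1 : ℝ) ^ (1 - α) * (t.2.2 : ℝ) ^ (2 - α)
    ≤ ((n : ℝ) - 2 - 2 * (B : ℝ)) ^ (2 - α) * (∑ j ∈ Finset.Icc A B, (j : ℝ) ^ (1 - α)) ^ 2
      + 2 * (∑ j ∈ Finset.Icc (B + 1) n, (j : ℝ) ^ (1 - α))
          * (∑ j ∈ Finset.Icc A n, (j : ℝ) ^ (1 - α)) * ((n : ℝ) / 2) ^ (2 - α) := by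
  have hnR : (64 : ℝ) ≤ (n : ℝ) := by exact_mod_cast hn
  set u : ℕ → ℝ := fun j => (j : ℝ) ^ (1 - α) with hu
  have hunn : ∀ i, 0 ≤ u i := fun i => Real.rpow_nonneg (Nat.cast_nonneg _) _
  set T := (Finset.range n ×ˢ Finset.range n ×ˢ Finset.range n).filter
      (fun t => t.1 + t.2.1 + t.2.2 = n - 2 ∧ 1 ≤ t.1 ∧ 1 ≤ t.2.1 ∧ 1 ≤ t.2.2 ∧
        f n ≤ (t.1 : ℝ) ∧ f n ≤ (t.2.1 : ℝ) ∧ (n : ℝ) / 2 < (t.2.2 : ℝ)) with hT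
  set w : ℕ × ℕ × ℕ → ℝ :=
    fun t => (t.1 : ℝ) ^ (1 - α) * (t.2.1 : ℝ) ^ (1 - α) * (t.2.2 : ℝ) ^ (2 - α) with hwdef
  have hwnn : ∀ t : ℕ × ℕ × ℕ, 0 ≤ w t := by
    intro t
    exact mul_nonneg (mul_nonneg (hunn _) (hunn _)) (Real.rpow_nonneg (Nat.cast_nonneg _) _)
  -- facts about members of T
  have hTfact : ∀ t ∈ T, t.1 + t.2.1 + t.2.2 = n - 2 ∧ f n ≤ (t.1 : ℝ) ∧ f n ≤ (t.2.1 : ℝ)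
      ∧ (n : ℝ) / 2 < (t.2.2 : ℝ) ∧ t.1 < n ∧ t.2.1 < n ∧ 1 ≤ t.2.2 := by
    intro t ht
    rw [hT, Finset.mem_filter, Finset.mem_product, Finset.mem_product,
      Finset.mem_range, Finset.mem_range] at ht
    exact ⟨ht.2.1, ht.2.2.2.2.2.1, ht.2.2.2.2.2.2.1, ht.2.2.2.2.2.2.2,
      ht.1.1, ht.1.2.1, ht.2.2.2.2.1⟩
  have hTA : ∀ t ∈ T, A ≤ t.1 ∧ A ≤ t.2.1 := by
    intro t ht
    obtain ⟨_, h1, h2, _⟩ := hTfact t ht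
    exact ⟨hceil _ h1, hceil _ h2⟩
  classical
  set Q : ℕ × ℕ × ℕ → Prop := fun t => t.1 ≤ B ∧ t.2.1 ≤ B with hQ
  rw [← Finset.sum_filter_add_sum_filter_not T Q w]
  have hsubA : T.filter Q ⊆ T := Finset.filter_subset _ _
  -- Part A bound
  have partA : ∑ t ∈ T.filter Q, w t
      ≤ ((n : ℝ) - 2 - 2 * (B : ℝ)) ^ (2 - α)
        * (∑ j ∈ Finset.Icc A B, (j : ℝ) ^ (1 - α)) ^ 2 := by
    have hCpos : (0 : ℝ) < (n : ℝ) - 2 - 2 * (B : ℝ) := by linarith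
    have step1 : ∑ t ∈ T.filter Q, w t
        ≤ ∑ t ∈ T.filter Q, (u t.1 * u t.2.1) * ((n : ℝ) - 2 - 2 * (B : ℝ)) ^ (2 - α) := by
      apply Finset.sum_le_sum
      intro t ht
      have htT := hsubA ht
      obtain ⟨hsum, _, _, hl2, _, _, _⟩ := hTfact t htT
      have htQ : t.1 ≤ B ∧ t.2.1 ≤ B := (Finset.mem_filter.mp ht).2
      have hlge : (n : ℝ) - 2 - 2 * (B : ℝ) ≤ (t.2.2 : ℝ) := by
        have h5 : t.1 + t.2.1 + t.2.2 + 2 = n := by omega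
        have := congrArg (fun k : ℕ => (k : ℝ)) h5
        push_cast at this
        have hb1 : (t.1 : ℝ) ≤ (B : ℝ) := by exact_mod_cast htQ.1
        have hb2 : (t.2.1 : ℝ) ≤ (B : ℝ) := by exact_mod_cast htQ.2
        linarith
      have hrr : (t.2.2 : ℝ) ^ (2 - α) ≤ ((n : ℝ) - 2 - 2 * (B : ℝ)) ^ (2 - α) :=
        Real.rpow_le_rpow_of_nonpos hCpos hlge (by linarith)
      show u t.1 * u t.2.1 * (t.2.2 : ℝ) ^ (2 - α) ≤ _
      apply mul_le_mul_of_nonneg_left hrr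
      exact mul_nonneg (hunn _) (hunn _)
    refine le_trans step1 ?_
    rw [← Finset.sum_mul]
    rw [mul_comm]
    apply mul_le_mul_of_nonneg_left ?_ (Real.rpow_nonneg (le_of_lt hCpos) _)
    rw [sq]
    apply proj_bound n _ (fun t ht => (hTfact t (hsubA ht)).1)
      (Finset.Icc A B) (Finset.Icc A B) ?_ ?_ u u hunn hunn
    · intro t ht
      rw [Finset.mem_Icc]
      exact ⟨(hTA t (hsubA ht)).1, ((Finset.mem_filter.mp ht).2 : Q t).1⟩
    · intro t ht
      rw [Finset.mem_Icc]
      exact ⟨(hTA t (hsubA ht)).2, ((Finset.mem_filter.mp ht).2 : Q t).2⟩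
  -- Part B bound
  have partB : ∑ t ∈ T.filter (fun t => ¬ Q t), w t
      ≤ 2 * (∑ j ∈ Finset.Icc (B + 1) n, (j : ℝ) ^ (1 - α))
          * (∑ j ∈ Finset.Icc A n, (j : ℝ) ^ (1 - α)) * ((n : ℝ) / 2) ^ (2 - α) := by
    have hhalf : (0 : ℝ) < (n : ℝ) / 2 := by linarith
    -- generic bound for a subfilter with l > n/2
    have wbound : ∀ T' : Finset (ℕ × ℕ × ℕ), T' ⊆ T →
        ∑ t ∈ T', w t ≤ (∑ t ∈ T', u t.1 * u t.2.1) * ((n : ℝ) / 2) ^ (2 - α) := by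
      intro T' hT'
      rw [Finset.sum_mul]
      apply Finset.sum_le_sum
      intro t ht
      obtain ⟨_, _, _, hl2, _, _, _⟩ := hTfact t (hT' ht)
      have hrr : (t.2.2 : ℝ) ^ (2 - α) ≤ ((n : ℝ) / 2) ^ (2 - α) :=
        Real.rpow_le_rpow_of_nonpos hhalf (le_of_lt hl2) (by linarith)
      show u t.1 * u t.2.1 * (t.2.2 : ℝ) ^ (2 - α) ≤ _
      apply mul_le_mul_of_nonneg_left hrr
      exact mul_nonneg (hunn _) (hunn _)
    have hsub : T.filter (fun t => ¬ Q t)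
        ⊆ T.filter (fun t => B < t.1) ∪ T.filter (fun t => B < t.2.1) := by
      intro t ht
      rw [Finset.mem_filter] at ht
      rw [Finset.mem_union]
      have h2 := ht.2
      rw [hQ, not_and_or, not_le, not_le] at h2
      rcases h2 with h | h
      · exact Or.inl (Finset.mem_filter.mpr ⟨ht.1, h⟩)
      · exact Or.inr (Finset.mem_filter.mpr ⟨ht.1, h⟩)
    have step1 : ∑ t ∈ T.filter (fun t => ¬ Q t), w t
        ≤ ∑ t ∈ T.filter (fun t => B < t.1), w t
          + ∑ t ∈ T.filter (fun t => B < t.2.1), w t := by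
      refine le_trans (Finset.sum_le_sum_of_subset_of_nonneg hsub (fun t _ _ => hwnn t)) ?_
      have := Finset.sum_union_inter (s₁ := T.filter (fun t => B < t.1))
        (s₂ := T.filter (fun t => B < t.2.1)) (f := w)
      have hnn : 0 ≤ ∑ t ∈ (T.filter (fun t => B < t.1)) ∩ (T.filter (fun t => B < t.2.1)), w t :=
        Finset.sum_nonneg (fun t _ => hwnn t)
      linarith
    have bnd1 : ∑ t ∈ T.filter (fun t => B < t.1), w t
        ≤ (∑ j ∈ Finset.Icc (B + 1) n, (j : ℝ) ^ (1 - α))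
          * (∑ j ∈ Finset.Icc A n, (j : ℝ) ^ (1 - α)) * ((n : ℝ) / 2) ^ (2 - α) := by
      refine le_trans (wbound _ (Finset.filter_subset _ _)) ?_
      apply mul_le_mul_of_nonneg_right ?_ (Real.rpow_nonneg (le_of_lt hhalf) _)
      apply proj_bound n _ (fun t ht => (hTfact t (Finset.filter_subset _ _ ht)).1)
        _ _ ?_ ?_ u u hunn hunn
      · intro t ht
        rw [Finset.mem_Icc]
        have h1 := (Finset.mem_filter.mp ht).2
        have h2 := (hTfact t (Finset.filter_subset _ _ ht)).2.2.2.2.1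
        omega
      · intro t ht
        rw [Finset.mem_Icc]
        have h1 := (hTA t (Finset.filter_subset _ _ ht)).2
        have h2 := (hTfact t (Finset.filter_subset _ _ ht)).2.2.2.2.2.1
        omega
    have bnd2 : ∑ t ∈ T.filter (fun t => B < t.2.1), w t
        ≤ (∑ j ∈ Finset.Icc (B + 1) n, (j : ℝ) ^ (1 - α))
          * (∑ j ∈ Finset.Icc A n, (j : ℝ) ^ (1 - α)) * ((n : ℝ) / 2) ^ (2 - α) := by
      refine le_trans (wbound _ (Finset.filter_subset _ _)) ?_
      apply mul_le_mul_of_nonneg_right ?_ (Real.rpow_nonneg (le_of_lt hhalf) _)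
      rw [mul_comm]
      apply proj_bound n _ (fun t ht => (hTfact t (Finset.filter_subset _ _ ht)).1)
        _ _ ?_ ?_ u u hunn hunn
      · intro t ht
        rw [Finset.mem_Icc]
        have h1 := (hTA t (Finset.filter_subset _ _ ht)).1
        have h2 := (hTfact t (Finset.filter_subset _ _ ht)).2.2.2.2.1
        omega
      · intro t ht
        rw [Finset.mem_Icc]
        have h1 := (Finset.mem_filter.mp ht).2
        have h2 := (hTfact t (Finset.filter_subset _ _ ht)).2.2.2.2.2.1
        omega
    calc ∑ t ∈ T.filter (fun t => ¬ Q t), w t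
        ≤ _ + _ := step1
      _ ≤ _ := by
          have := add_le_add bnd1 bnd2
          refine le_trans this (le_of_eq ?_)
          ring
  linarith [partA, partB]

set_option maxHeartbeats 2000000 in
theorem sum_three_index_asymptotics (α : ℝ) (hα : 3 < α)
    (f : ℕ → ℝ) (hf : Tendsto f atTop atTop)
    (hfo : Tendsto (fun n => f n / (n : ℝ) ^ (1 / (α - 2))) atTop (nhds 0)) :
    Tendsto (fun n : ℕ =>
        (∑ t ∈ (Finset.range n ×ˢ Finset.range n ×ˢ Finset.range n).filter
            (fun t => t.1 + t.2.1 + t.2.2 = n - 2 ∧ 1 ≤ t.1 ∧ 1 ≤ t.2.1 ∧ 1 ≤ t.2.2 ∧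
              f n ≤ (t.1 : ℝ) ∧ f n ≤ (t.2.1 : ℝ) ∧ (n : ℝ) / 2 < (t.2.2 : ℝ)),
          (t.1 : ℝ) ^ (1 - α) * (t.2.1 : ℝ) ^ (1 - α) * (t.2.2 : ℝ) ^ (2 - α)) /
        (1 / (α - 2) ^ 2 * f n ^ (4 - 2 * α) * (n : ℝ) ^ (2 - α)))
      atTop (nhds 1) := by
  have hα2 : (0:ℝ) < α - 2 := by linarith
  set γ : ℝ := 1 / (α - 2) with hγ
  set β : ℝ := (γ + 1) / 2 with hβ
  have hγpos : 0 < γ := by positivity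
  have hγ1 : γ < 1 := by rw [hγ, div_lt_one hα2]; linarith
  have hγβ : γ < β := by rw [hβ]; linarith
  have hβ1 : β < 1 := by rw [hβ]; linarith
  have hβpos : 0 < β := by rw [hβ]; linarith
  have htn : Tendsto (fun n : ℕ => (n : ℝ)) atTop atTop := tendsto_natCast_atTop_atTop
  have hfpos : ∀ᶠ n in atTop, 0 < f n := hf.eventually_gt_atTop 0
  have hf2 : ∀ᶠ n in atTop, 2 ≤ f n := hf.eventually_ge_atTop 2
  set A : ℕ → ℕ := fun n => ⌈f n⌉₊ with hA
  set B : ℕ → ℕ := fun n => ⌊(n : ℝ) ^ β⌋₊ with hB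
  set P : ℕ → ℝ := fun n => ∑ j ∈ Finset.Icc (A n) (B n), (j : ℝ) ^ (1 - α) with hPd
  set S : ℕ → ℝ := fun n =>
      ∑ t ∈ (Finset.range n ×ˢ Finset.range n ×ˢ Finset.range n).filter
          (fun t => t.1 + t.2.1 + t.2.2 = n - 2 ∧ 1 ≤ t.1 ∧ 1 ≤ t.2.1 ∧ 1 ≤ t.2.2 ∧
            f n ≤ (t.1 : ℝ) ∧ f n ≤ (t.2.1 : ℝ) ∧ (n : ℝ) / 2 < (t.2.2 : ℝ)),
        (t.1 : ℝ) ^ (1 - α) * (t.2.1 : ℝ) ^ (1 - α) * (t.2.2 : ℝ) ^ (2 - α) with hS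
  set D : ℕ → ℝ := fun n => 1 / (α - 2) ^ 2 * f n ^ (4 - 2 * α) * (n : ℝ) ^ (2 - α) with hD
  -- generic rpow limit lemmas
  have hrpow0 : ∀ g : ℕ → ℝ, Tendsto g atTop atTop →
      Tendsto (fun n => g n ^ (2 - α)) atTop (nhds 0) := by
    intro g hg
    have h1 := (tendsto_rpow_neg_atTop hα2).comp hg
    have he : -(α - 2) = 2 - α := by ring
    rw [he] at h1
    exact h1
  have hrpow1 : ∀ g : ℕ → ℝ, Tendsto g atTop (nhds 1) →
      Tendsto (fun n => g n ^ (2 - α)) atTop (nhds 1) := by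
    intro g hg
    have h1 := hg.rpow_const (p := 2 - α) (Or.inl one_ne_zero)
    rwa [Real.one_rpow] at h1
  -- n^γ / f n → ∞
  have hgf : Tendsto (fun n : ℕ => (n : ℝ) ^ γ / f n) atTop atTop := by
    have h1 : Tendsto (fun n : ℕ => f n / (n : ℝ) ^ γ) atTop (nhdsWithin 0 (Set.Ioi 0)) := by
      rw [tendsto_nhdsWithin_iff]
      refine ⟨hfo, ?_⟩
      filter_upwards [hfpos, htn.eventually_gt_atTop 0] with n h1 h2
      exact Set.mem_Ioi.mpr (div_pos h1 (Real.rpow_pos_of_pos h2 _))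
    have h2 := h1.inv_tendsto_nhdsGT_zero
    apply h2.congr
    intro n
    simp [Pi.inv_apply, inv_div]
  -- n^β / f n → ∞
  have hnβf : Tendsto (fun n : ℕ => (n : ℝ) ^ β / f n) atTop atTop := by
    have h1 : Tendsto (fun n : ℕ => (n : ℝ) ^ (β - γ)) atTop atTop :=
      (tendsto_rpow_atTop (by linarith)).comp htn
    have h2 := h1.atTop_mul_atTop₀ hgf
    apply h2.congr'
    filter_upwards [htn.eventually_gt_atTop 0] with n hn
    show (n : ℝ) ^ (β - γ) * ((n : ℝ) ^ γ / f n) = (n : ℝ) ^ β / f n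
    rw [mul_div_assoc', ← Real.rpow_add hn]
    ring_nf
  -- B n / f n → ∞
  have hBf : Tendsto (fun n : ℕ => (B n : ℝ) / f n) atTop atTop := by
    apply tendsto_atTop_mono' atTop ?_ (tendsto_atTop_add_const_right atTop (-1) hnβf)
    filter_upwards [hf2] with n hf2n
    have hfp : (0:ℝ) < f n := by linarith
    have h1 : (n : ℝ) ^ β - 1 ≤ (B n : ℝ) := le_of_lt (Nat.sub_one_lt_floor _)
    have h2 : ((n : ℝ) ^ β - 1) / f n ≤ (B n : ℝ) / f n :=
      (div_le_div_iff_of_pos_right hfp).mpr h1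
    have h3 : 1 / f n ≤ 1 := by rw [div_le_one hfp]; linarith
    have h4 : ((n : ℝ) ^ β - 1) / f n = (n : ℝ) ^ β / f n - 1 / f n := by rw [sub_div]
    show (n : ℝ) ^ β / f n + (-1) ≤ (B n : ℝ) / f n
    linarith
  -- (B+1)/f → ∞
  have hB1f : Tendsto (fun n : ℕ => ((B n : ℝ) + 1) / f n) atTop atTop := by
    apply tendsto_atTop_mono' atTop ?_ hBf
    filter_upwards [hfpos] with n hfp
    exact (div_le_div_iff_of_pos_right hfp).mpr (by linarith)
  -- A/f → 1
  have hAf : Tendsto (fun n : ℕ => (A n : ℝ) / f n) atTop (nhds 1) := by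
    have hup : Tendsto (fun n : ℕ => 1 + (f n)⁻¹) atTop (nhds 1) := by
      have h1 := (tendsto_const_nhds (x := (1:ℝ))).add (tendsto_inv_atTop_zero.comp hf)
      rwa [add_zero] at h1
    apply tendsto_of_tendsto_of_tendsto_of_le_of_le' tendsto_const_nhds hup
    · filter_upwards [hfpos] with n hfp
      rw [le_div_iff₀ hfp, one_mul]
      exact Nat.le_ceil _
    · filter_upwards [hfpos] with n hfp
      have h1 : (A n : ℝ) < f n + 1 := Nat.ceil_lt_add_one (le_of_lt hfp)
      have h2 : (A n : ℝ) / f n ≤ (f n + 1) / f n :=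
        (div_le_div_iff_of_pos_right hfp).mpr (le_of_lt h1)
      refine le_trans h2 (le_of_eq ?_)
      field_simp
  have hAf2 := hrpow1 _ hAf
  have hB1f2 := hrpow0 _ hB1f
  have hBf2 := hrpow0 _ hBf
  have hff1 : Tendsto (fun n : ℕ => (f n - 1) / f n) atTop (nhds 1) := by
    have h1 := (tendsto_const_nhds (x := (1:ℝ))).sub (tendsto_inv_atTop_zero.comp hf)
    rw [sub_zero] at h1
    apply h1.congr'
    filter_upwards [hfpos] with n hfp
    show 1 - (f n)⁻¹ = (f n - 1) / f n
    field_simp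
  have hff2 := hrpow1 _ hff1
  -- eventually n^β ≤ n/8
  have hc4 : ∀ᶠ n : ℕ in atTop, (n : ℝ) ^ β ≤ (n : ℝ) / 8 := by
    have h0 : Tendsto (fun n : ℕ => (n : ℝ) ^ (β - 1)) atTop (nhds 0) := by
      have h1 := (tendsto_rpow_neg_atTop (show (0:ℝ) < 1 - β by linarith)).comp htn
      have he : -(1 - β) = β - 1 := by ring
      rwa [he] at h1
    filter_upwards [h0.eventually_lt_const (show (0:ℝ) < 1/8 by norm_num),
      htn.eventually_gt_atTop 0] with n h1 h2
    have h3 : (n : ℝ) ^ β = (n : ℝ) ^ (β - 1) * (n : ℝ) := by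
      rw [show β = (β - 1) + 1 by ring, Real.rpow_add h2, Real.rpow_one]
      ring_nf
    rw [h3]
    rw [div_eq_mul_inv, mul_comm ((n:ℝ)) (8:ℝ)⁻¹]
    apply mul_le_mul_of_nonneg_right (by linarith) (le_of_lt h2)
  -- positivity of f-powers etc.
  have hfrpos : ∀ᶠ n : ℕ in atTop, 0 < f n ^ (2 - α) := by
    filter_upwards [hfpos] with n hfp
    exact Real.rpow_pos_of_pos hfp _
  -- the key limit for P
  have hQ : Tendsto (fun n => P n * (α - 2) / f n ^ (2 - α)) atTop (nhds 1) := by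
    have hlow : Tendsto
        (fun n => ((A n : ℝ) / f n) ^ (2 - α) - (((B n : ℝ) + 1) / f n) ^ (2 - α))
        atTop (nhds 1) := by
      have h1 := hAf2.sub hB1f2
      rwa [sub_zero] at h1
    apply tendsto_of_tendsto_of_tendsto_of_le_of_le' hlow hff2
    · -- lower bound on P(α-2)/f^{2-α}
      filter_upwards [hf2, hfrpos] with n hf2n hfr
      have hfp : (0:ℝ) < f n := by linarith
      have hA1 : 1 ≤ A n := by
        have : (1:ℝ) ≤ (A n : ℝ) := le_trans (by linarith) (Nat.le_ceil _)
        exact_mod_cast this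
      have key := sum_pow_ge α hα (A n) (B n) hA1
      have key2 : (A n : ℝ) ^ (2 - α) - ((B n : ℝ) + 1) ^ (2 - α) ≤ P n * (α - 2) := by
        rw [div_le_iff₀ hα2] at key
        linarith [key]
      have he1 : ((A n : ℝ) / f n) ^ (2 - α) = (A n : ℝ) ^ (2 - α) / f n ^ (2 - α) :=
        Real.div_rpow (Nat.cast_nonneg _) (le_of_lt hfp) _
      have he2 : (((B n : ℝ) + 1) / f n) ^ (2 - α)
          = ((B n : ℝ) + 1) ^ (2 - α) / f n ^ (2 - α) :=
        Real.div_rpow (by positivity) (le_of_lt hfp) _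
      rw [he1, he2, div_sub_div_same, div_le_div_iff_of_pos_right hfr]
      exact key2
    · -- upper bound
      filter_upwards [hf2, hfrpos] with n hf2n hfr
      have hfp : (0:ℝ) < f n := by linarith
      have hA2n : 2 ≤ A n := by
        have : (2:ℝ) ≤ (A n : ℝ) := le_trans hf2n (Nat.le_ceil _)
        exact_mod_cast this
      have key := sum_pow_le α hα (A n) (B n) hA2n
      have h1 : ((A n : ℝ) - 1) ^ (2 - α) ≤ (f n - 1) ^ (2 - α) := by
        apply Real.rpow_le_rpow_of_nonpos (by linarith) ?_ (by linarith)
        have := Nat.le_ceil (f n)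
        show f n - 1 ≤ (A n : ℝ) - 1
        have : f n ≤ (A n : ℝ) := Nat.le_ceil _
        linarith
      have key2 : P n * (α - 2) ≤ (f n - 1) ^ (2 - α) := by
        rw [le_div_iff₀ hα2] at key
        linarith
      have he3 : ((f n - 1) / f n) ^ (2 - α) = (f n - 1) ^ (2 - α) / f n ^ (2 - α) :=
        Real.div_rpow (by linarith) (le_of_lt hfp) _
      rw [he3, div_le_div_iff_of_pos_right hfr]
      exact key2
  -- D positive
  have hDpos : ∀ᶠ n : ℕ in atTop, 0 < D n := by
    filter_upwards [hfpos, htn.eventually_gt_atTop 0] with n hfp hnp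
    have h1 : (0:ℝ) < f n ^ (4 - 2 * α) := Real.rpow_pos_of_pos hfp _
    have h2 : (0:ℝ) < (n:ℝ) ^ (2 - α) := Real.rpow_pos_of_pos hnp _
    have h3 : (0:ℝ) < 1 / (α - 2) ^ 2 := by positivity
    exact mul_pos (mul_pos h3 h1) h2
  -- limit of (n^(β-1))
  have hβ1lim : Tendsto (fun n : ℕ => (n : ℝ) ^ (β - 1)) atTop (nhds 0) := by
    have h1 := (tendsto_rpow_neg_atTop (show (0:ℝ) < 1 - β by linarith)).comp htn
    have he : -(1 - β) = β - 1 := by ring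
    rwa [he] at h1
  -- B n / n → 0
  have hBn0 : Tendsto (fun n : ℕ => (B n : ℝ) / (n : ℝ)) atTop (nhds 0) := by
    apply tendsto_of_tendsto_of_tendsto_of_le_of_le' tendsto_const_nhds hβ1lim
    · filter_upwards [htn.eventually_gt_atTop 0] with n hnp
      positivity
    · filter_upwards [htn.eventually_gt_atTop 0] with n hnp
      have h1 : (B n : ℝ) ≤ (n : ℝ) ^ β := Nat.floor_le (by positivity)
      have h2 : (n : ℝ) ^ β = (n : ℝ) ^ (β - 1) * (n : ℝ) := by
        rw [show β = (β - 1) + 1 by ring, Real.rpow_add hnp, Real.rpow_one]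
        ring_nf
      rw [div_le_iff₀ hnp]
      rw [h2] at h1
      exact h1
  -- low sequence and its limit
  set low : ℕ → ℝ := fun n => (P n * (α - 2) / f n ^ (2 - α)) ^ 2 with hlowd
  have hlowlim : Tendsto low atTop (nhds 1) := by
    have h1 := hQ.mul hQ
    rw [mul_one] at h1
    apply h1.congr
    intro n
    exact (sq (P n * (α - 2) / f n ^ (2 - α))).symm
  -- first factor of up and its limit
  have hE1 : Tendsto (fun n : ℕ => ((n : ℝ) - 2 - 2 * (B n : ℝ)) / (n : ℝ)) atTop (nhds 1) := by
    have h1 := ((tendsto_const_nhds (x := (1:ℝ))).sub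
      ((tendsto_inv_atTop_zero.comp htn).const_mul 2)).sub (hBn0.const_mul 2)
    simp only [mul_zero, sub_zero] at h1
    apply h1.congr'
    filter_upwards [htn.eventually_gt_atTop 0] with n hnp
    show 1 - 2 * ((n:ℝ))⁻¹ - 2 * ((B n : ℝ) / (n : ℝ)) = ((n : ℝ) - 2 - 2 * (B n : ℝ)) / (n : ℝ)
    field_simp
  have hE2 := hrpow1 _ hE1
  set up : ℕ → ℝ := fun n =>
    (((n : ℝ) - 2 - 2 * (B n : ℝ)) / (n : ℝ)) ^ (2 - α) * low n
      + 2 * ((B n : ℝ) / f n) ^ (2 - α) * ((f n - 1) / f n) ^ (2 - α) * ((2:ℝ) ^ (2 - α))⁻¹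
    with hupd
  have huplim : Tendsto up atTop (nhds 1) := by
    have hterm2 := ((hBf2.const_mul 2).mul hff2).mul_const ((2:ℝ) ^ (2 - α))⁻¹
    have h1 := (hE2.mul hlowlim).add hterm2
    norm_num at h1
    exact h1
  -- eventual condition bundle
  have hBev : ∀ᶠ n : ℕ in atTop, (2:ℝ) ≤ (B n : ℝ) / f n := hBf.eventually_ge_atTop 2
  have h64 : ∀ᶠ n : ℕ in atTop, 64 ≤ n := eventually_ge_atTop 64
  -- lower eventual inequality
  have hlowineq : ∀ᶠ n : ℕ in atTop, low n ≤ S n / D n := by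
    filter_upwards [hf2, hc4, hBev, h64, hDpos] with n hf2n hc4n hB2f h64n hDn
    have hfp : (0:ℝ) < f n := by linarith
    have hnp : (0:ℝ) < (n:ℝ) := by
      have : (64:ℝ) ≤ (n:ℝ) := by exact_mod_cast h64n
      linarith
    have hfA : f n ≤ (A n : ℝ) := Nat.le_ceil _
    have hA2n : 2 ≤ A n := by
      have : (2:ℝ) ≤ (A n : ℝ) := le_trans hf2n hfA
      exact_mod_cast this
    have hBr : 2 * f n ≤ (B n : ℝ) := by
      rw [le_div_iff₀ hfp] at hB2f
      linarith
    have hABn : A n ≤ B n := by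
      have h1 : (A n : ℝ) < f n + 1 := Nat.ceil_lt_add_one (le_of_lt hfp)
      have h2 : (A n : ℝ) < (B n : ℝ) := by linarith
      exact le_of_lt (by exact_mod_cast h2)
    have hBle : (B n : ℝ) ≤ (n : ℝ) / 8 :=
      le_trans (Nat.floor_le (by positivity)) hc4n
    have hLB := lower_bound α hα f n (A n) (B n) hfA hA2n hABn hBle h64n
    have hW : (0:ℝ) < f n ^ (2 - α) := Real.rpow_pos_of_pos hfp _
    have hZ : (0:ℝ) < (n:ℝ) ^ (2 - α) := Real.rpow_pos_of_pos hnp _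
    have i5 : f n ^ (4 - 2 * α) = f n ^ (2 - α) * f n ^ (2 - α) := by
      rw [show (4 - 2 * α) = (2 - α) + (2 - α) by ring, Real.rpow_add hfp]
    have heq : low n = ((n : ℝ) ^ (2 - α) * P n ^ 2) / D n := by
      rw [hlowd, hD]
      show (P n * (α - 2) / f n ^ (2 - α)) ^ 2
        = (n : ℝ) ^ (2 - α) * P n ^ 2 / (1 / (α - 2) ^ 2 * f n ^ (4 - 2 * α) * (n : ℝ) ^ (2 - α))
      rw [i5]
      field_simp
    rw [heq]
    apply (div_le_div_iff_of_pos_right hDn).mpr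
    exact hLB
  -- upper eventual inequality
  have hupineq : ∀ᶠ n : ℕ in atTop, S n / D n ≤ up n := by
    filter_upwards [hf2, hc4, hBev, h64, hDpos] with n hf2n hc4n hB2f h64n hDn
    have hfp : (0:ℝ) < f n := by linarith
    have hnp : (0:ℝ) < (n:ℝ) := by
      have : (64:ℝ) ≤ (n:ℝ) := by exact_mod_cast h64n
      linarith
    have hn64 : (64:ℝ) ≤ (n:ℝ) := by exact_mod_cast h64n
    have hfA : f n ≤ (A n : ℝ) := Nat.le_ceil _
    have hA2n : 2 ≤ A n := by
      have : (2:ℝ) ≤ (A n : ℝ) := le_trans hf2n hfA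
      exact_mod_cast this
    have hBr : 2 * f n ≤ (B n : ℝ) := by
      rw [le_div_iff₀ hfp] at hB2f
      linarith
    have hB1n : 1 ≤ B n := by
      have : (1:ℝ) ≤ (B n : ℝ) := by linarith
      exact_mod_cast this
    have hBle : (B n : ℝ) ≤ (n : ℝ) / 8 :=
      le_trans (Nat.floor_le (by positivity)) hc4n
    have hceil : ∀ j : ℕ, f n ≤ (j : ℝ) → A n ≤ j := fun j hj => Nat.ceil_le.mpr hj
    have hUB := upper_bound α hα f n (A n) (B n) hceil hBle h64n
    -- bound the two tail sums
    have hs1 : ∑ j ∈ Finset.Icc (B n + 1) n, (j : ℝ) ^ (1 - α)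
        ≤ (B n : ℝ) ^ (2 - α) / (α - 2) := by
      have h1 := sum_pow_le α hα (B n + 1) n (by omega)
      have h2 : ((B n + 1 : ℕ) : ℝ) - 1 = (B n : ℝ) := by push_cast; ring
      rwa [h2] at h1
    have hs2 : ∑ j ∈ Finset.Icc (A n) n, (j : ℝ) ^ (1 - α)
        ≤ (f n - 1) ^ (2 - α) / (α - 2) := by
      have h1 := sum_pow_le α hα (A n) n hA2n
      refine le_trans h1 ((div_le_div_iff_of_pos_right hα2).mpr ?_)
      exact Real.rpow_le_rpow_of_nonpos (by linarith) (by linarith [hfA]) (by linarith)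
    have hP0 : 0 ≤ P n := Finset.sum_nonneg (fun j _ => Real.rpow_nonneg (Nat.cast_nonneg _) _)
    have hC : (0:ℝ) < (n : ℝ) - 2 - 2 * (B n : ℝ) := by linarith
    have hCq : (0:ℝ) ≤ ((n : ℝ) - 2 - 2 * (B n : ℝ)) ^ (2 - α) :=
      Real.rpow_nonneg (le_of_lt hC) _
    have hhalfq : (0:ℝ) ≤ ((n : ℝ) / 2) ^ (2 - α) := Real.rpow_nonneg (by linarith) _
    have hs1nn : (0:ℝ) ≤ ∑ j ∈ Finset.Icc (B n + 1) n, (j : ℝ) ^ (1 - α) :=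
      Finset.sum_nonneg (fun j _ => Real.rpow_nonneg (Nat.cast_nonneg _) _)
    have hs2nn : (0:ℝ) ≤ ∑ j ∈ Finset.Icc (A n) n, (j : ℝ) ^ (1 - α) :=
      Finset.sum_nonneg (fun j _ => Real.rpow_nonneg (Nat.cast_nonneg _) _)
    have hXnn : (0:ℝ) ≤ (B n : ℝ) ^ (2 - α) / (α - 2) := by
      apply div_nonneg (Real.rpow_nonneg (Nat.cast_nonneg _) _) (by linarith)
    have hYnn : (0:ℝ) ≤ (f n - 1) ^ (2 - α) / (α - 2) := by
      apply div_nonneg (Real.rpow_nonneg (by linarith) _) (by linarith)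
    have hprod : (∑ j ∈ Finset.Icc (B n + 1) n, (j : ℝ) ^ (1 - α))
          * (∑ j ∈ Finset.Icc (A n) n, (j : ℝ) ^ (1 - α))
        ≤ ((B n : ℝ) ^ (2 - α) / (α - 2)) * ((f n - 1) ^ (2 - α) / (α - 2)) :=
      mul_le_mul hs1 hs2 hs2nn hXnn
    have hUB2 : S n ≤ ((n : ℝ) - 2 - 2 * (B n : ℝ)) ^ (2 - α) * P n ^ 2
        + 2 * ((B n : ℝ) ^ (2 - α) / (α - 2)) * ((f n - 1) ^ (2 - α) / (α - 2))
          * ((n : ℝ) / 2) ^ (2 - α) := by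
      refine le_trans hUB ?_
      have t1 : 2 * (∑ j ∈ Finset.Icc (B n + 1) n, (j : ℝ) ^ (1 - α))
            * (∑ j ∈ Finset.Icc (A n) n, (j : ℝ) ^ (1 - α)) * ((n : ℝ) / 2) ^ (2 - α)
          ≤ 2 * ((B n : ℝ) ^ (2 - α) / (α - 2)) * ((f n - 1) ^ (2 - α) / (α - 2))
            * ((n : ℝ) / 2) ^ (2 - α) := by
        apply mul_le_mul_of_nonneg_right ?_ hhalfq
        rw [mul_assoc, mul_assoc]
        exact mul_le_mul_of_nonneg_left hprod (by norm_num)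
      linarith
    have hW : (0:ℝ) < f n ^ (2 - α) := Real.rpow_pos_of_pos hfp _
    have hZ : (0:ℝ) < (n:ℝ) ^ (2 - α) := Real.rpow_pos_of_pos hnp _
    have h2q : (0:ℝ) < (2:ℝ) ^ (2 - α) := Real.rpow_pos_of_pos (by norm_num) _
    have i1 : (((n : ℝ) - 2 - 2 * (B n : ℝ)) / (n : ℝ)) ^ (2 - α)
        = ((n : ℝ) - 2 - 2 * (B n : ℝ)) ^ (2 - α) / (n : ℝ) ^ (2 - α) :=
      Real.div_rpow (le_of_lt hC) (le_of_lt hnp) _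
    have i2 : ((B n : ℝ) / f n) ^ (2 - α) = (B n : ℝ) ^ (2 - α) / f n ^ (2 - α) :=
      Real.div_rpow (Nat.cast_nonneg _) (le_of_lt hfp) _
    have i3 : ((f n - 1) / f n) ^ (2 - α) = (f n - 1) ^ (2 - α) / f n ^ (2 - α) :=
      Real.div_rpow (by linarith) (le_of_lt hfp) _
    have i4 : ((n : ℝ) / 2) ^ (2 - α) = (n : ℝ) ^ (2 - α) / (2:ℝ) ^ (2 - α) :=
      Real.div_rpow (le_of_lt hnp) (by norm_num) _
    have i5 : f n ^ (4 - 2 * α) = f n ^ (2 - α) * f n ^ (2 - α) := by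
      rw [show (4 - 2 * α) = (2 - α) + (2 - α) by ring, Real.rpow_add hfp]
    have heq : up n = (((n : ℝ) - 2 - 2 * (B n : ℝ)) ^ (2 - α) * P n ^ 2
        + 2 * ((B n : ℝ) ^ (2 - α) / (α - 2)) * ((f n - 1) ^ (2 - α) / (α - 2))
          * ((n : ℝ) / 2) ^ (2 - α)) / D n := by
      show (((n : ℝ) - 2 - 2 * (B n : ℝ)) / (n : ℝ)) ^ (2 - α)
            * (P n * (α - 2) / f n ^ (2 - α)) ^ 2
          + 2 * ((B n : ℝ) / f n) ^ (2 - α) * ((f n - 1) / f n) ^ (2 - α)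
            * ((2:ℝ) ^ (2 - α))⁻¹ = _
      rw [i1, i2, i3, i4, hD]
      show _ = _ / (1 / (α - 2) ^ 2 * f n ^ (4 - 2 * α) * (n : ℝ) ^ (2 - α))
      rw [i5]
      field_simp
    rw [heq]
    apply (div_le_div_iff_of_pos_right hDn).mpr
    exact hUB2
  exact tendsto_of_tendsto_of_tendsto_of_le_of_le' hlowlim huplim hlowineq hupineq
end
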